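/- arXiv:1806.10362 — 3 statements merged into one kernel-verified Lean document; each statement's English description precedes it below -/
import Mathlib

section
/- The permutation 2143 is a core of 21354: every permutation in the ground of cover(21354) ∖ {2143} is contained in 2143. Moreover μ(1, 21354) = 0, so 21354 is a nice permutation. -/
open scoped Classical

/-- Pattern containment of permutations. -/
def Contains {k n : ℕ} (σ : Equiv.Perm (Fin k)) (π : Equiv.Perm (Fin n)) : Prop :=
  ∃ f : Fin k ↪o Fin n, ∀ i j : Fin k, σ i < σ j ↔ π (f i) < π (f j)

/-- Strict pattern containment. -/
def StrictContains {k n : ℕ} (σ : Equiv.Perm (Fin k)) (π : Equiv.Perm (Fin n)) : Prop :=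
  Contains σ π ∧ ¬ Contains π σ

/-- The Möbius function of the permutation containment poset. -/
noncomputable def mu {k : ℕ} (σ : Equiv.Perm (Fin k)) : (n : ℕ) → Equiv.Perm (Fin n) → ℤ
  | n, π =>
    if Contains σ π then
      if Contains π σ then 1
      else
        - ∑ m ∈ (Finset.range n).attach, ∑ τ : Equiv.Perm (Fin m.1),
            (if Contains σ τ ∧ Contains τ π then mu σ m.1 τ else 0)
    else 0
termination_by n π => n
decreasing_by exact Finset.mem_range.mp m.2

def pone : Equiv.Perm (Fin 1) := 1
noncomputable def p12 : Equiv.Perm (Fin 2) := 1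
noncomputable def p21 : Equiv.Perm (Fin 2) := Equiv.ofBijective ![1, 0] (by decide)
noncomputable def p123 : Equiv.Perm (Fin 3) := 1
noncomputable def p132 : Equiv.Perm (Fin 3) := Equiv.ofBijective ![0, 2, 1] (by decide)
noncomputable def p321 : Equiv.Perm (Fin 3) := Equiv.ofBijective ![2, 1, 0] (by decide)
noncomputable def p1243 : Equiv.Perm (Fin 4) := Equiv.ofBijective ![0, 1, 3, 2] (by decide)
noncomputable def p2143 : Equiv.Perm (Fin 4) := Equiv.ofBijective ![1, 0, 3, 2] (by decide)
noncomputable def p21354 : Equiv.Perm (Fin 5) := Equiv.ofBijective ![1, 0, 2, 4, 3] (by decide)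
noncomputable def p45132 : Equiv.Perm (Fin 5) := Equiv.ofBijective ![3, 4, 0, 2, 1] (by decide)
noncomputable def p25143 : Equiv.Perm (Fin 5) := Equiv.ofBijective ![1, 4, 0, 3, 2] (by decide)
noncomputable def p14532 : Equiv.Perm (Fin 5) := Equiv.ofBijective ![0, 3, 4, 2, 1] (by decide)
noncomputable def p24513 : Equiv.Perm (Fin 5) := Equiv.ofBijective ![1, 3, 4, 0, 2] (by decide)
noncomputable def p256143 : Equiv.Perm (Fin 6) := Equiv.ofBijective ![1, 4, 5, 0, 3, 2] (by decide)

/-- `π` has an interval (contiguous positions, contiguous values) order-isomorphic to `φ`. -/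
def HasIntervalIso {n m : ℕ} (π : Equiv.Perm (Fin n)) (φ : Equiv.Perm (Fin m)) : Prop :=
  ∃ s b : ℕ, s + m ≤ n ∧
    ∀ j : Fin m, ∀ hj : s + j.val < n, ((π ⟨s + j.val, hj⟩) : Fin n).val = b + (φ j).val

def HasUpAdjacency {n : ℕ} (π : Equiv.Perm (Fin n)) : Prop := HasIntervalIso π p12
def HasDownAdjacency {n : ℕ} (π : Equiv.Perm (Fin n)) : Prop := HasIntervalIso π p21
def OpposingAdjacencies {n : ℕ} (π : Equiv.Perm (Fin n)) : Prop :=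
  HasUpAdjacency π ∧ HasDownAdjacency π
def AdjacencyFree {n : ℕ} (π : Equiv.Perm (Fin n)) : Prop :=
  ¬ HasUpAdjacency π ∧ ¬ HasDownAdjacency π

def revP {n : ℕ} (π : Equiv.Perm (Fin n)) : Equiv.Perm (Fin n) := (Fin.revPerm).trans π
def complP {n : ℕ} (π : Equiv.Perm (Fin n)) : Equiv.Perm (Fin n) := π.trans Fin.revPerm

/-- The eight symmetries of a permutation under the dihedral group of the square. -/
def symmetries {n : ℕ} (π : Equiv.Perm (Fin n)) : Set (Equiv.Perm (Fin n)) :=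
  {π, revP π, complP π, revP (complP π), π⁻¹, revP π⁻¹, complP π⁻¹, revP (complP π⁻¹)}

def posMap (c m i : ℕ) : ℕ := if i ≤ c then i else i + m - 1

/-- `π` is the inflation of `σ` at position `c` by `α` (all other points singletons). -/
def IsInflationAt {n m N : ℕ} (σ : Equiv.Perm (Fin n)) (c : Fin n) (α : Equiv.Perm (Fin m))
    (π : Equiv.Perm (Fin N)) : Prop :=
  N + 1 = n + m ∧
  (∃ b : ℕ, ∀ j : Fin m, ∀ hj : c.val + j.val < N,
      ((π ⟨c.val + j.val, hj⟩) : Fin N).val = b + (α j).val) ∧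
  (∀ i i' : Fin n, ∀ hi : posMap c.val m i.val < N, ∀ hi' : posMap c.val m i'.val < N,
    (σ i < σ i' ↔ π ⟨posMap c.val m i.val, hi⟩ < π ⟨posMap c.val m i'.val, hi'⟩))

/-- `π` is the inflation `σ[α 0, …, α (n-1)]`. -/
def IsInflation {n N : ℕ} (σ : Equiv.Perm (Fin n))
    (α : Fin n → Σ m : ℕ, Equiv.Perm (Fin m)) (π : Equiv.Perm (Fin N)) : Prop :=
  (∀ i, 1 ≤ (α i).1) ∧
  N = ∑ i, (α i).1 ∧
  (∃ b : Fin n → ℕ,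
    (∀ i : Fin n, ∀ j : Fin (α i).1,
        ∀ hj : (∑ i' ∈ Finset.univ.filter (fun i' => i' < i), (α i').1) + j.val < N,
      ((π ⟨(∑ i' ∈ Finset.univ.filter (fun i' => i' < i), (α i').1) + j.val, hj⟩) : Fin N).val
        = b i + ((α i).2 j).val) ∧
    (∀ i i' : Fin n, σ i < σ i' ↔ b i < b i'))

abbrev SigmaPerm := Σ m : ℕ, Equiv.Perm (Fin m)

def SContains (σ τ : SigmaPerm) : Prop := Contains σ.2 τ.2
def SLt (σ τ : SigmaPerm) : Prop := StrictContains σ.2 τ.2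

/-- The set of strongly zero permutations. -/
def SZ : Set SigmaPerm :=
  {φ | ∀ (N : ℕ) (π : Equiv.Perm (Fin N)), HasIntervalIso π φ.2 → mu pone N π = 0}

/-- The closure of a permutation: everything it contains. -/
def permClosure (φ : SigmaPerm) : Set SigmaPerm := {τ | SContains τ φ}

/-- The cover of `φ`: permutations covered by `φ`. -/
def permCover (φ : SigmaPerm) : Set SigmaPerm :=
  {ψ | SLt ψ φ ∧ ¬ ∃ τ : SigmaPerm, SLt ψ τ ∧ SLt τ φ}

/-- The ground of a set of permutations. -/
def permGround (L : Set SigmaPerm) : Set SigmaPerm :=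
  (⋃ l ∈ L, permClosure l) \ SZ

def IsCore (ψ φ : SigmaPerm) : Prop :=
  ψ ∈ permCover φ ∧ permGround (permCover φ \ {ψ}) ⊆ permClosure ψ

def Nice (φ : SigmaPerm) : Prop := mu pone φ.1 φ.2 = 0 ∧ ∃ ψ, IsCore ψ φ

/-- A permutation is simple if its only intervals have size 1 or `n`. -/
def IsSimple {n : ℕ} (π : Equiv.Perm (Fin n)) : Prop :=
  ∀ s m : ℕ, 1 ≤ m → s + m ≤ n →
    (∃ b : ℕ, ∀ j : ℕ, ∀ hj : j < m, ∀ h : s + j < n,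
      b ≤ ((π ⟨s + j, h⟩) : Fin n).val ∧ ((π ⟨s + j, h⟩) : Fin n).val < b + m) →
    m = 1 ∨ m = n

/-- The number of simple permutations of length `m`. -/
noncomputable def numSimple (m : ℕ) : ℕ :=
  (Finset.univ.filter (fun π : Equiv.Perm (Fin m) => IsSimple π)).card

/-- The proportion of permutations of length `n` with principal Möbius function zero. -/
noncomputable def Zprop (n : ℕ) : ℝ :=
  ((Finset.univ.filter (fun π : Equiv.Perm (Fin n) => mu pone n π = 0)).card : ℝ) / (n.factorial : ℝ)

/-- The proportion of permutations of length `n` that are strongly zero. -/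
noncomputable def Zsz (n : ℕ) : ℝ :=
  ((Finset.univ.filter (fun π : Equiv.Perm (Fin n) => (⟨n, π⟩ : SigmaPerm) ∈ SZ)).card : ℝ) / (n.factorial : ℝ)

namespace PF
open Equiv

lemma contains_refl {n : ℕ} (π : Perm (Fin n)) : Contains π π :=
  ⟨OrderEmbedding.ofStrictMono id strictMono_id, fun _ _ => Iff.rfl⟩

lemma contains_trans {a b c : ℕ} {σ : Perm (Fin a)} {τ : Perm (Fin b)} {ρ : Perm (Fin c)}
    (h1 : Contains σ τ) (h2 : Contains τ ρ) : Contains σ ρ := by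
  obtain ⟨f, hf⟩ := h1; obtain ⟨g, hg⟩ := h2
  exact ⟨f.trans g, fun i j => (hf i j).trans (hg (f i) (f j))⟩

lemma contains_card_le {k n : ℕ} {σ : Perm (Fin k)} {π : Perm (Fin n)}
    (h : Contains σ π) : k ≤ n := by
  obtain ⟨f, -⟩ := h
  simpa using Fintype.card_le_of_injective f f.injective

lemma contains_pone {n : ℕ} (π : Perm (Fin n)) (h : 1 ≤ n) : Contains pone π := by
  refine ⟨OrderEmbedding.ofStrictMono (fun _ => ⟨0, h⟩) ?_, ?_⟩
  · intro i j hij; exact absurd (Subsingleton.elim i j) (by rintro rfl; exact lt_irrefl _ hij)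
  · intro i j
    rw [Subsingleton.elim i j]
    simp

lemma not_contains_pone {n : ℕ} (π : Perm (Fin n)) (h : 2 ≤ n) : ¬ Contains π pone :=
  fun hc => by have := contains_card_le hc; omega

lemma strictMono_le_apply {n m : ℕ} {g : Fin n → Fin m} (hg : StrictMono g) :
    ∀ i : Fin n, i.val ≤ (g i).val := by
  intro ⟨iv, hi⟩
  induction iv with
  | zero => exact Nat.zero_le _
  | succ k ih =>
    have h1 : (⟨k, by omega⟩ : Fin n) < ⟨k + 1, hi⟩ := by simp [Fin.lt_def]
    have h2 := hg h1
    have h3 := ih (by omega)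
    rw [Fin.lt_def] at h2
    simp only [Fin.val] at h2 h3 ⊢
    omega

lemma strictMono_fin_id {n : ℕ} {g : Fin n → Fin n} (hg : StrictMono g) : ∀ i, g i = i := by
  have hle := strictMono_le_apply hg
  have hg' : StrictMono (fun i : Fin n => (g i.rev).rev) := by
    intro a b hab
    have : b.rev < a.rev := by rwa [Fin.rev_lt_rev]
    have := hg this
    rwa [Fin.rev_lt_rev]
  have hle' := strictMono_le_apply hg'
  intro i
  have h1 := hle i
  have h2 := hle' i.rev
  simp only [Fin.rev_rev, Fin.val_rev] at h2
  have hb := (g i).isLt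
  have hb2 := i.isLt
  exact Fin.ext (by omega)

lemma perm_det {n : ℕ} {σ τ : Perm (Fin n)} (h : ∀ i j, σ i < σ j ↔ τ i < τ j) : σ = τ := by
  have hg : StrictMono (fun i => σ (τ.symm i)) := by
    intro a b hab
    exact (h _ _).mpr (by simpa using hab)
  have := strictMono_fin_id hg
  ext x
  have := this (τ x)
  simpa using congrArg Fin.val this

lemma contains_same_length {n : ℕ} {σ τ : Perm (Fin n)} (h : Contains σ τ) : σ = τ := by
  obtain ⟨f, hf⟩ := h
  have hid := strictMono_fin_id f.strictMono
  refine perm_det (fun i j => ?_)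
  rw [hf i j, hid i, hid j]

end PF
namespace PF
open Equiv

def dval (v w : ℕ) : ℕ := if w < v then w else w - 1

lemma dval_lt_dval {v w w' : ℕ} (hw : w ≠ v) (hw' : w' ≠ v) :
    dval v w < dval v w' ↔ w < w' := by
  unfold dval; split_ifs <;> omega

lemma dval_add {b x y : ℕ} (h : y ≠ x) : dval (b + x) (b + y) = b + dval x y := by
  unfold dval; split_ifs <;> omega

lemma succAbove_val {n' : ℕ} (p : Fin (n' + 1)) (i : Fin n') :
    (p.succAbove i).val = if i.val < p.val then i.val else i.val + 1 := by
  rw [Fin.succAbove]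
  rcases Nat.lt_or_ge i.val p.val with h | h
  · rw [if_pos (by rwa [Fin.lt_def]), if_pos h]; rfl
  · rw [if_neg (by rw [Fin.lt_def]; exact not_lt.mpr h), if_neg (not_lt.mpr h)]; rfl

noncomputable def delPerm {n' : ℕ} (π : Perm (Fin (n' + 1))) (p : Fin (n' + 1)) :
    Perm (Fin n') :=
  Equiv.ofBijective
    (fun i => ⟨dval (π p).val (π (p.succAbove i)).val, by
      have h1 : p.succAbove i ≠ p := Fin.succAbove_ne p i
      have h2 : π (p.succAbove i) ≠ π p := fun h => h1 (π.injective h)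
      have h3 : (π (p.succAbove i)).val ≠ (π p).val := fun h => h2 (Fin.ext h)
      have h4 := (π (p.succAbove i)).isLt
      have h5 := i.isLt
      unfold dval; split_ifs <;> omega⟩)
    (by
      rw [Fintype.bijective_iff_injective_and_card]
      refine ⟨fun i j hij => ?_, by simp⟩
      have hvals := congrArg Fin.val hij
      simp only at hvals
      have hi : (π (p.succAbove i)).val ≠ (π p).val :=
        fun h => Fin.succAbove_ne p i (π.injective (Fin.ext h))
      have hj : (π (p.succAbove j)).val ≠ (π p).val :=
        fun h => Fin.succAbove_ne p j (π.injective (Fin.ext h))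
      have : (π (p.succAbove i)).val = (π (p.succAbove j)).val := by
        unfold dval at hvals; split_ifs at hvals <;> omega
      have := π.injective (Fin.ext this)
      exact Fin.succAbove_right_injective this)

lemma delPerm_val {n' : ℕ} (π : Perm (Fin (n' + 1))) (p : Fin (n' + 1)) (i : Fin n') :
    (delPerm π p i).val = dval (π p).val (π (p.succAbove i)).val := rfl

lemma delPerm_lt_iff {n' : ℕ} (π : Perm (Fin (n' + 1))) (p : Fin (n' + 1)) (i j : Fin n') :
    delPerm π p i < delPerm π p j ↔ π (p.succAbove i) < π (p.succAbove j) := by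
  rw [Fin.lt_def, Fin.lt_def, delPerm_val, delPerm_val]
  exact dval_lt_dval
    (fun h => Fin.succAbove_ne p i (π.injective (Fin.ext h)))
    (fun h => Fin.succAbove_ne p j (π.injective (Fin.ext h)))

lemma contains_delPerm {n' : ℕ} (π : Perm (Fin (n' + 1))) (p : Fin (n' + 1)) :
    Contains (delPerm π p) π :=
  ⟨Fin.succAboveOrderEmb p, fun i j => delPerm_lt_iff π p i j⟩

/-- values outside the block positions are outside the block values -/
lemma block_outside {n m : ℕ} {π : Perm (Fin n)} {φ : Perm (Fin m)} {s b : ℕ}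
    (hs : s + m ≤ n)
    (hbl : ∀ j : Fin m, ∀ hj : s + j.val < n, (π ⟨s + j.val, hj⟩).val = b + (φ j).val)
    (q : Fin n) (hq : ¬ (s ≤ q.val ∧ q.val < s + m)) :
    ¬ (b ≤ (π q).val ∧ (π q).val < b + m) := by
  rintro ⟨h1, h2⟩
  have hm : 0 < m := by omega
  set j : Fin m := φ.symm ⟨(π q).val - b, by omega⟩ with hj
  have hφj : (φ j).val = (π q).val - b := by rw [hj]; rw [Equiv.apply_symm_apply]
  have hlt : s + j.val < n := by have := j.isLt; omega
  have := hbl j hlt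
  have heq : π ⟨s + j.val, hlt⟩ = π q := Fin.ext (by omega)
  have := π.injective heq
  apply hq
  have : s + j.val = q.val := congrArg Fin.val this
  have := j.isLt
  omega

/-- the block values fit below n -/
lemma block_bmn {n m : ℕ} {π : Perm (Fin n)} {φ : Perm (Fin m)} {s b : ℕ}
    (hm : 0 < m) (hs : s + m ≤ n)
    (hbl : ∀ j : Fin m, ∀ hj : s + j.val < n, (π ⟨s + j.val, hj⟩).val = b + (φ j).val) :
    b + m ≤ n := by
  set j : Fin m := φ.symm ⟨m - 1, by omega⟩ with hj
  have hφj : (φ j).val = m - 1 := by rw [hj]; rw [Equiv.apply_symm_apply]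
  have hlt : s + j.val < n := by have := j.isLt; omega
  have := hbl j hlt
  have := (π ⟨s + j.val, hlt⟩).isLt
  omega

/-- block structure of the deleted permutation -/
lemma delPerm_block {n' m' : ℕ} {π : Perm (Fin (n' + 1))} {φ : Perm (Fin (m' + 1))}
    {s b : ℕ} (k : Fin (m' + 1))
    (hs : s + (m' + 1) ≤ n' + 1)
    (hbl : ∀ j : Fin (m' + 1), ∀ hj : s + j.val < n' + 1,
      (π ⟨s + j.val, hj⟩).val = b + (φ j).val)
    (j : Fin m') (hj : s + j.val < n') :
    (delPerm π ⟨s + k.val, by have := k.isLt; omega⟩ ⟨s + j.val, hj⟩).val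
      = b + dval (φ k).val (φ (k.succAbove j)).val := by
  set p : Fin (n' + 1) := ⟨s + k.val, by have := k.isLt; omega⟩ with hp
  have hpv : (π p).val = b + (φ k).val := hbl k (by have := k.isLt; omega)
  have hsa : p.succAbove ⟨s + j.val, hj⟩ =
      ⟨s + (k.succAbove j).val, by have := (k.succAbove j).isLt; omega⟩ := by
    apply Fin.ext
    simp only [succAbove_val, hp]
    split_ifs <;> omega
  rw [delPerm_val, hsa, hbl (k.succAbove j) _, hpv]
  exact dval_add (fun h => Fin.succAbove_ne k j (φ.injective (Fin.ext h)))

end PF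
namespace PF
open Equiv Finset

lemma perm_rank {K : ℕ} (q : Perm (Fin K)) (i : Fin K) :
    (q i).val = (univ.filter (fun i' => q i' < q i)).card := by
  have hmap : univ.filter (fun i' => q i' < q i)
      = (Finset.Iio (q i)).map q.symm.toEmbedding := by
    ext x
    simp only [mem_filter, mem_univ, true_and, mem_map, Finset.mem_Iio,
      Equiv.coe_toEmbedding]
    constructor
    · intro hx; exact ⟨q x, hx, by simp⟩
    · rintro ⟨w, hw, rfl⟩; simpa using hw
  rw [hmap, Finset.card_map, Fin.card_Iio]

lemma downclosed_card {L : ℕ} (P : Fin L → Prop) [DecidablePred P]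
    (hdc : ∀ i j : Fin L, j ≤ i → P i → P j) (i : Fin L) :
    P i ↔ i.val < (Finset.univ.filter (fun x => P x)).card := by
  constructor
  · intro hP
    have hsub : Finset.Iic i ⊆ univ.filter (fun x => P x) := by
      intro j hj
      simp only [Finset.mem_Iic] at hj
      simp only [mem_filter, mem_univ, true_and]
      exact hdc i j hj hP
    have := Finset.card_le_card hsub
    rw [Fin.card_Iic] at this
    omega
  · intro hcard
    by_contra hP
    have hsub : univ.filter (fun x => P x) ⊆ Finset.Iio i := by
      intro j hj
      simp only [mem_filter, mem_univ, true_and] at hj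
      simp only [Finset.mem_Iio]
      rcases lt_or_ge j i with h | h
      · exact h
      · exact absurd (hdc j i h hj) hP
    have := Finset.card_le_card hsub
    rw [Fin.card_Iio] at this
    omega

set_option maxHeartbeats 1000000 in
lemma induced_block {L n m : ℕ} {lam : Perm (Fin L)} {π : Perm (Fin n)} {φ : Perm (Fin m)}
    {s b : ℕ} (hs : s + m ≤ n)
    (hbl : ∀ j : Fin m, ∀ hj : s + j.val < n, (π ⟨s + j.val, hj⟩).val = b + (φ j).val)
    (e : Fin L → Fin n) (he : StrictMono e)
    (hpat : ∀ i j, lam i < lam j ↔ π (e i) < π (e j)) :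
    ∃ (a t c : ℕ) (h : Fin t → Fin m), t ≤ m ∧ a + t ≤ L ∧ StrictMono h ∧
      (∀ i : Fin L, (e i).val < s ↔ i.val < a) ∧
      (∀ i : Fin L, (e i).val < s + m ↔ i.val < a + t) ∧
      (∀ j : Fin t, ∀ hj : a + j.val < L, (e ⟨a + j.val, hj⟩).val = s + (h j).val) ∧
      (∀ (z : Perm (Fin t)),
        (∀ i j : Fin t, z i < z j ↔ (φ (h i)).val < (φ (h j)).val) →
        ∀ j : Fin t, ∀ hj : a + j.val < L, (lam ⟨a + j.val, hj⟩).val = c + (z j).val) := by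
  classical
  obtain ⟨a, ha⟩ : ∃ a, (univ.filter (fun i : Fin L => (e i).val < s)).card = a := ⟨_, rfl⟩
  obtain ⟨a', ha'⟩ : ∃ a', (univ.filter (fun i : Fin L => (e i).val < s + m)).card = a' := ⟨_, rfl⟩
  have hA : ∀ i : Fin L, (e i).val < s ↔ i.val < a := by
    intro i
    have h0 := downclosed_card (fun x => (e x).val < s)
      (fun i j hji hi => by
        have := he.monotone hji; rw [Fin.le_def] at this; omega) i
    rwa [ha] at h0
  have hA' : ∀ i : Fin L, (e i).val < s + m ↔ i.val < a' := by
    intro i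
    have h0 := downclosed_card (fun x => (e x).val < s + m)
      (fun i j hji hi => by
        have := he.monotone hji; rw [Fin.le_def] at this; omega) i
    rwa [ha'] at h0
  have haa' : a ≤ a' := by
    rw [← ha, ← ha']
    refine Finset.card_le_card (fun x hx => ?_)
    simp only [mem_filter, mem_univ, true_and] at hx ⊢
    omega
  have ha'L : a' ≤ L := by
    rw [← ha']
    have := Finset.card_filter_le (univ : Finset (Fin L)) (fun i : Fin L => (e i).val < s + m)
    simpa using this
  obtain ⟨t, htdef⟩ : ∃ t, a' - a = t := ⟨_, rfl⟩
  have hat : a + t = a' := by omega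
  -- the induced map h
  have hhb : ∀ j : Fin t, ∀ hj : a + j.val < L,
      s ≤ (e ⟨a + j.val, hj⟩).val ∧ (e ⟨a + j.val, hj⟩).val < s + m := by
    intro j hj
    have hmk : ((⟨a + j.val, hj⟩ : Fin L)).val = a + j.val := rfl
    have h1 := hA ⟨a + j.val, hj⟩
    have h2 := hA' ⟨a + j.val, hj⟩
    have hjt := j.isLt
    rw [hmk] at h1 h2
    constructor
    · by_contra hcon
      have := h1.mp (by omega)
      omega
    · exact h2.mpr (by omega)
  set h : Fin t → Fin m := fun j => ⟨(e ⟨a + j.val, by have := j.isLt; omega⟩).val - s, by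
    have := hhb j (by have := j.isLt; omega); omega⟩ with hh
  have he' : ∀ j : Fin t, ∀ hj : a + j.val < L, (e ⟨a + j.val, hj⟩).val = s + (h j).val := by
    intro j hj
    have := hhb j hj
    simp only [hh]
    omega
  have hmono : StrictMono h := by
    intro i j hij
    have h1 := he' i (by have := i.isLt; omega)
    have h2 := he' j (by have := j.isLt; omega)
    have : (⟨a + i.val, by have := i.isLt; omega⟩ : Fin L) < ⟨a + j.val, by have := j.isLt; omega⟩ := by
      simp only [Fin.lt_def]; exact by have := hij; rw [Fin.lt_def] at this; omega
    have := he this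
    rw [Fin.lt_def] at this ⊢
    omega
  have htm : t ≤ m := by
    have := Fintype.card_le_of_injective h hmono.injective
    simpa using this
  set c := (univ.filter (fun i' : Fin L => (π (e i')).val < b)).card with hc
  refine ⟨a, t, c, h, htm, by omega, hmono, hA, by rw [hat]; exact hA', he', ?_⟩
  intro z hz j hj
  set i0 : Fin L := ⟨a + j.val, hj⟩ with hi0
  have hval0 : (π (e i0)).val = b + (φ (h j)).val := by
    have h1 : e i0 = ⟨s + (h j).val, by have := (h j).isLt; omega⟩ :=
      Fin.ext (he' j hj)
    rw [h1, hbl]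
  have step1 : (lam i0).val = (univ.filter (fun i' => lam i' < lam i0)).card :=
    perm_rank lam i0
  have step2 : (univ.filter (fun i' => lam i' < lam i0))
      = (univ.filter (fun i' : Fin L => (π (e i')).val < b + (φ (h j)).val)) := by
    apply Finset.filter_congr
    intro x _
    rw [hpat x i0, Fin.lt_def, hval0]
  have hsplit : (univ.filter (fun i' : Fin L => (π (e i')).val < b + (φ (h j)).val))
      = (univ.filter (fun i' : Fin L => (π (e i')).val < b))
        ∪ (univ.filter (fun i' : Fin L => b ≤ (π (e i')).val ∧ (π (e i')).val < b + (φ (h j)).val)) := by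
    ext x
    simp only [mem_filter, mem_univ, true_and, Finset.mem_union]
    omega
  have hdisj : Disjoint (univ.filter (fun i' : Fin L => (π (e i')).val < b))
      (univ.filter (fun i' : Fin L => b ≤ (π (e i')).val ∧ (π (e i')).val < b + (φ (h j)).val)) := by
    rw [Finset.disjoint_left]
    intro x hx hx'
    simp only [mem_filter, mem_univ, true_and] at hx hx'
    omega
  have hval2 : ∀ (xv : ℕ) (hxv : xv < t) (hx2 : a + xv < L),
      (π (e ⟨a + xv, hx2⟩)).val = b + (φ (h ⟨xv, hxv⟩)).val := by
    intro xv hxv hx2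
    have h3 : e ⟨a + xv, hx2⟩
        = ⟨s + (h ⟨xv, hxv⟩).val, by have := (h ⟨xv, hxv⟩).isLt; omega⟩ := by
      apply Fin.ext
      exact he' ⟨xv, hxv⟩ hx2
    rw [h3, hbl]
  obtain ⟨emb, hembv⟩ : ∃ emb : Fin t ↪ Fin L, ∀ j' : Fin t, (emb j').val = a + j'.val := by
    refine ⟨⟨fun j' => ⟨a + j'.val, by have := j'.isLt; omega⟩, ?_⟩, fun _ => rfl⟩
    intro x y hxy
    have : a + x.val = a + y.val := congrArg Fin.val hxy
    exact Fin.ext (by omega)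
  have step5 : (univ.filter (fun i' : Fin L => b ≤ (π (e i')).val ∧ (π (e i')).val < b + (φ (h j)).val))
      = (univ.filter (fun j' : Fin t => (φ (h j')).val < (φ (h j)).val)).map emb := by
    ext x
    simp only [mem_filter, mem_univ, true_and, Finset.mem_map]
    constructor
    · intro hx
      have hin : s ≤ (e x).val ∧ (e x).val < s + m := by
        by_contra hcon
        have := block_outside hs hbl (e x) (by omega)
        have hjm := (φ (h j)).isLt
        omega
      have h2 := (hA' x).mp hin.2
      have h1 : ¬ x.val < a := fun hcon => by
        have := (hA x).mpr hcon; omega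
      have hxv2 := hval2 (x.val - a) (by omega) (by omega)
      have hxeq : (⟨a + (x.val - a), by omega⟩ : Fin L) = x :=
        Fin.ext (show a + (x.val - a) = x.val by omega)
      rw [hxeq] at hxv2
      refine ⟨⟨x.val - a, by omega⟩, by omega, ?_⟩
      exact Fin.ext ((hembv _).trans (show a + (x.val - a) = x.val by omega))
    · rintro ⟨j', hj', rfl⟩
      have hj2 : a + j'.val < L := by have := j'.isLt; omega
      have hxeq : emb j' = ⟨a + j'.val, hj2⟩ := Fin.ext (hembv j')
      have hxv2 := hval2 j'.val j'.isLt hj2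
      simp only [Fin.eta] at hxv2
      rw [hxeq]
      omega
  have step6 : (univ.filter (fun j' : Fin t => (φ (h j')).val < (φ (h j)).val)).card = (z j).val := by
    have hcong : (univ.filter (fun j' : Fin t => (φ (h j')).val < (φ (h j)).val))
        = (univ.filter (fun j' : Fin t => z j' < z j)) := by
      apply Finset.filter_congr
      intro x _
      rw [hz x j]
    rw [hcong, ← perm_rank z j]
  have : (lam i0).val = c + (z j).val := by
    rw [step1, step2, hsplit, Finset.card_union_of_disjoint hdisj, step5,
      Finset.card_map, step6]
  exact this

end PF
namespace PF
open Equiv Finset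

set_option maxHeartbeats 2000000 in
lemma transplant {n' m' L s b k : ℕ} {π : Perm (Fin (n' + 1))} {φ : Perm (Fin (m' + 1))}
    {ψ : Perm (Fin m')} (hk : k < m' + 1)
    (hs : s + (m' + 1) ≤ n' + 1)
    (hbl : ∀ j : Fin (m' + 1), ∀ hj : s + j.val < n' + 1,
      (π ⟨s + j.val, hj⟩).val = b + (φ j).val)
    (hψ : ∀ j : Fin m', (ψ j).val
      = dval (φ ⟨k, hk⟩).val (φ ((⟨k, hk⟩ : Fin (m' + 1)).succAbove j)).val)
    {lam : Perm (Fin L)} {e : Fin L → Fin (n' + 1)} (he : StrictMono e)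
    (hpat : ∀ i j, lam i < lam j ↔ π (e i) < π (e j))
    {a t : ℕ} {h : Fin t → Fin (m' + 1)}
    (haL : a + t ≤ L)
    (hA : ∀ i : Fin L, (e i).val < s ↔ i.val < a)
    (hA' : ∀ i : Fin L, (e i).val < s + (m' + 1) ↔ i.val < a + t)
    (he' : ∀ j : Fin t, ∀ hj : a + j.val < L, (e ⟨a + j.val, hj⟩).val = s + (h j).val)
    {G : Fin t → Fin m'} (hG : StrictMono G)
    (hGpat : ∀ i j : Fin t, (φ (h i)).val < (φ (h j)).val ↔ (ψ (G i)).val < (ψ (G j)).val) :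
    Contains lam (delPerm π ⟨s + k, by omega⟩) := by
  set p : Fin (n' + 1) := ⟨s + k, by omega⟩ with hp
  set ρ := delPerm π p with hρdef
  have hpval : p.val = s + k := rfl
  have hbmn : b + (m' + 1) ≤ n' + 1 := block_bmn (by omega) hs hbl
  have hv : (π p).val = b + (φ ⟨k, hk⟩).val := hbl ⟨k, hk⟩ (by omega)
  have hφkb : (φ ⟨k, hk⟩).val < m' + 1 := (φ ⟨k, hk⟩).isLt
  have htm' : t ≤ m' := by
    have := Fintype.card_le_of_injective G hG.injective; simpa using this
  have hρb : ∀ j : Fin m', ∀ hj : s + j.val < n',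
      (ρ ⟨s + j.val, hj⟩).val = b + (ψ j).val := by
    intro j hj
    have h1 := delPerm_block (π := π) (φ := φ) (⟨k, hk⟩ : Fin (m' + 1)) hs hbl j hj
    rw [← hψ j] at h1
    exact h1
  have hwmid : ∀ (xv : ℕ) (hxv : xv < t) (hxL : a + xv < L),
      (π (e ⟨a + xv, hxL⟩)).val = b + (φ (h ⟨xv, hxv⟩)).val := by
    intro xv hxv hxL
    have h3 : e ⟨a + xv, hxL⟩
        = ⟨s + (h ⟨xv, hxv⟩).val, by have := (h ⟨xv, hxv⟩).isLt; omega⟩ :=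
      Fin.ext (he' ⟨xv, hxv⟩ hxL)
    rw [h3, hbl]
  have hwout : ∀ i : Fin L, ¬ (a ≤ i.val ∧ i.val < a + t) →
      ¬ (b ≤ (π (e i)).val ∧ (π (e i)).val < b + (m' + 1)) := by
    intro i hi
    apply block_outside hs hbl
    rintro ⟨h1, h2⟩
    exact hi ⟨by have := (hA i).mpr; by_contra hcon; exact absurd ((hA i).mp (by omega)) (by omega),
      (hA' i).mp h2⟩
  have hne : ∀ i : Fin L, ¬ (a ≤ i.val ∧ i.val < a + t) →
      (π (e i)).val ≠ (π p).val := by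
    intro i hi hcon
    exact hwout i hi (by omega)
  -- the new embedding on values
  set E : Fin L → ℕ := fun i =>
    if h1 : i.val < a then (e i).val
    else if h2 : i.val < a + t then s + (G ⟨i.val - a, by omega⟩).val
    else (e i).val - 1 with hE
  have hEfacts : ∀ i : Fin L,
      (i.val < a ∧ E i = (e i).val ∧ (e i).val < s) ∨
      (a ≤ i.val ∧ i.val < a + t ∧ s ≤ (e i).val ∧ (e i).val < s + (m' + 1) ∧
        ∃ hx : i.val - a < t, E i = s + (G ⟨i.val - a, hx⟩).val) ∨
      (a + t ≤ i.val ∧ s + (m' + 1) ≤ (e i).val ∧ E i = (e i).val - 1) := by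
    intro i
    by_cases h1 : i.val < a
    · exact Or.inl ⟨h1, by simp only [hE, dif_pos h1], (hA i).mpr h1⟩
    · by_cases h2 : i.val < a + t
      · refine Or.inr (Or.inl ⟨by omega, h2, ?_, (hA' i).mpr h2, ⟨by omega, ?_⟩⟩)
        · by_contra hcon
          exact h1 ((hA i).mp (by omega))
        · simp only [hE, dif_neg h1, dif_pos h2]
      · refine Or.inr (Or.inr ⟨by omega, ?_, by simp only [hE, dif_neg h1, dif_neg h2]⟩)
        by_contra hcon
        exact h2 ((hA' i).mp (by omega))
  have hEbound : ∀ i : Fin L, E i < n' := by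
    intro i
    rcases hEfacts i with ⟨_, hEi, hei⟩ | ⟨_, _, _, _, hx, hEi⟩ | ⟨_, hei, hEi⟩
    · omega
    · have := (G ⟨i.val - a, hx⟩).isLt; omega
    · have := (e i).isLt; omega
  set e' : Fin L → Fin n' := fun i => ⟨E i, hEbound i⟩ with he'def
  have hGm : ∀ (x y : ℕ) (hx : x < t) (hy : y < t), x < y →
      (G ⟨x, hx⟩).val < (G ⟨y, hy⟩).val := by
    intro x y hx hy hxy
    have := hG (show (⟨x, hx⟩ : Fin t) < ⟨y, hy⟩ by rw [Fin.lt_def]; exact hxy)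
    rwa [Fin.lt_def] at this
  have hmono' : StrictMono e' := by
    intro i j hij
    have hijv : i.val < j.val := hij
    have heij : (e i).val < (e j).val := he hij
    rw [Fin.lt_def]
    show E i < E j
    rcases hEfacts i with ⟨hi1, hEi, hei⟩ | ⟨hi1, hi2, hei1, hei2, hx, hEi⟩ | ⟨hi1, hei, hEi⟩ <;>
      rcases hEfacts j with ⟨hj1, hEj, hej⟩ | ⟨hj1, hj2, hej1, hej2, hy, hEj⟩ | ⟨hj1, hej, hEj⟩
    · omega
    · have := (G ⟨j.val - a, hy⟩).isLt; omega
    · omega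
    · omega
    · have := hGm (i.val - a) (j.val - a) hx hy (by omega); omega
    · have := (G ⟨i.val - a, hx⟩).isLt; omega
    · omega
    · have := (G ⟨j.val - a, hy⟩).isLt; omega
    · omega
  -- values of ρ ∘ e'
  have hρout : ∀ i : Fin L, ¬ (a ≤ i.val ∧ i.val < a + t) →
      (ρ (e' i)).val = dval (π p).val (π (e i)).val := by
    intro i hi
    have hsa : p.succAbove (e' i) = e i := by
      apply Fin.ext
      rw [succAbove_val]
      rcases hEfacts i with ⟨hi1, hEi, hei⟩ | ⟨hi1, hi2, _⟩ | ⟨hi1, hei, hEi⟩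
      · show (if E i < p.val then E i else E i + 1) = (e i).val
        rw [hpval]; split_ifs <;> omega
      · exact absurd ⟨hi1, hi2⟩ hi
      · show (if E i < p.val then E i else E i + 1) = (e i).val
        rw [hpval]
        have := (e i).isLt
        split_ifs <;> omega
    rw [hρdef, delPerm_val, hsa]
  have hρmid : ∀ i : Fin L, a ≤ i.val → ∀ hx : i.val - a < t,
      (ρ (e' i)).val = b + (ψ (G ⟨i.val - a, hx⟩)).val := by
    intro i hi1 hx
    have hGb := (G ⟨i.val - a, hx⟩).isLt
    have hee : e' i = ⟨s + (G ⟨i.val - a, hx⟩).val, by omega⟩ := by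
      apply Fin.ext
      show E i = s + (G ⟨i.val - a, hx⟩).val
      rcases hEfacts i with ⟨hi1', _, _⟩ | ⟨_, _, _, _, hx', hEi⟩ | ⟨hi1', _, _⟩
      · omega
      · rw [hEi]
      · omega
    rw [hee, hρb]
  -- conclude
  refine ⟨OrderEmbedding.ofStrictMono e' hmono', ?_⟩
  intro i j
  rw [hpat i j, OrderEmbedding.coe_ofStrictMono, Fin.lt_def, Fin.lt_def]
  rcases hEfacts i with ⟨hi1, hEi, hei⟩ | ⟨hi1, hi2, hei1, hei2, hx, hEi⟩ | ⟨hi1, hei, hEi⟩ <;>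
    rcases hEfacts j with ⟨hj1, hEj, hej⟩ | ⟨hj1, hj2, hej1, hej2, hy, hEj⟩ | ⟨hj1, hej, hEj⟩
  -- out/out
  · rw [hρout i (by omega), hρout j (by omega)]
    rw [dval_lt_dval (hne i (by omega)) (hne j (by omega))]
  -- out/mid
  · rw [hρout i (by omega), hρmid j (by omega) hy]
    have hwi := hwout i (by omega)
    have hwj : (π (e j)).val = b + (φ (h ⟨j.val - a, hy⟩)).val := by
      have h0 := hwmid (j.val - a) hy (by omega)
      have hjeq : (⟨a + (j.val - a), by omega⟩ : Fin L) = j :=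
        Fin.ext (show a + (j.val - a) = j.val by omega)
      rw [hjeq] at h0
      exact h0
    have hφb := (φ (h ⟨j.val - a, hy⟩)).isLt
    have hψb := (ψ (G ⟨j.val - a, hy⟩)).isLt
    rw [hwj, hv]
    unfold dval
    split_ifs <;> omega
  -- out/out(right)
  · rw [hρout i (by omega), hρout j (by omega)]
    rw [dval_lt_dval (hne i (by omega)) (hne j (by omega))]
  -- mid/out
  · rw [hρmid i (by omega) hx, hρout j (by omega)]
    have hwj := hwout j (by omega)
    have hwi : (π (e i)).val = b + (φ (h ⟨i.val - a, hx⟩)).val := by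
      have h0 := hwmid (i.val - a) hx (by omega)
      have hieq : (⟨a + (i.val - a), by omega⟩ : Fin L) = i :=
        Fin.ext (show a + (i.val - a) = i.val by omega)
      rw [hieq] at h0
      exact h0
    have hφb := (φ (h ⟨i.val - a, hx⟩)).isLt
    have hψb := (ψ (G ⟨i.val - a, hx⟩)).isLt
    rw [hwi, hv]
    unfold dval
    split_ifs <;> omega
  -- mid/mid
  · rw [hρmid i (by omega) hx, hρmid j (by omega) hy]
    have hwi : (π (e i)).val = b + (φ (h ⟨i.val - a, hx⟩)).val := by
      have h0 := hwmid (i.val - a) hx (by omega)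
      have hieq : (⟨a + (i.val - a), by omega⟩ : Fin L) = i :=
        Fin.ext (show a + (i.val - a) = i.val by omega)
      rw [hieq] at h0
      exact h0
    have hwj : (π (e j)).val = b + (φ (h ⟨j.val - a, hy⟩)).val := by
      have h0 := hwmid (j.val - a) hy (by omega)
      have hjeq : (⟨a + (j.val - a), by omega⟩ : Fin L) = j :=
        Fin.ext (show a + (j.val - a) = j.val by omega)
      rw [hjeq] at h0
      exact h0
    have hGp := hGpat ⟨i.val - a, hx⟩ ⟨j.val - a, hy⟩
    rw [hwi, hwj]
    omega
  -- mid/out(right)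
  · rw [hρmid i (by omega) hx, hρout j (by omega)]
    have hwj := hwout j (by omega)
    have hwi : (π (e i)).val = b + (φ (h ⟨i.val - a, hx⟩)).val := by
      have h0 := hwmid (i.val - a) hx (by omega)
      have hieq : (⟨a + (i.val - a), by omega⟩ : Fin L) = i :=
        Fin.ext (show a + (i.val - a) = i.val by omega)
      rw [hieq] at h0
      exact h0
    have hφb := (φ (h ⟨i.val - a, hx⟩)).isLt
    have hψb := (ψ (G ⟨i.val - a, hx⟩)).isLt
    rw [hwi, hv]
    unfold dval
    split_ifs <;> omega
  -- out(right)/out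
  · rw [hρout i (by omega), hρout j (by omega)]
    rw [dval_lt_dval (hne i (by omega)) (hne j (by omega))]
  -- out(right)/mid
  · rw [hρout i (by omega), hρmid j (by omega) hy]
    have hwi := hwout i (by omega)
    have hwj : (π (e j)).val = b + (φ (h ⟨j.val - a, hy⟩)).val := by
      have h0 := hwmid (j.val - a) hy (by omega)
      have hjeq : (⟨a + (j.val - a), by omega⟩ : Fin L) = j :=
        Fin.ext (show a + (j.val - a) = j.val by omega)
      rw [hjeq] at h0
      exact h0
    have hφb := (φ (h ⟨j.val - a, hy⟩)).isLt
    have hψb := (ψ (G ⟨j.val - a, hy⟩)).isLt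
    rw [hwj, hv]
    unfold dval
    split_ifs <;> omega
  -- out(right)/out(right)
  · rw [hρout i (by omega), hρout j (by omega)]
    rw [dval_lt_dval (hne i (by omega)) (hne j (by omega))]

end PF
namespace PF
open Equiv Finset

lemma master {n' : ℕ} (π : Perm (Fin (n' + 1))) (ρ : Perm (Fin n'))
    (hn : 2 ≤ n')
    (hρπ : Contains ρ π)
    (habs : ∀ (L : ℕ), L < n' + 1 → ∀ lam : Perm (Fin L),
      Contains lam π → mu pone L lam ≠ 0 → Contains lam ρ) :
    mu pone (n' + 1) π = 0 := by
  have h1 : Contains pone π := contains_pone π (by omega)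
  have h2 : ¬ Contains π pone := not_contains_pone π (by omega)
  have h1ρ : Contains pone ρ := contains_pone ρ (by omega)
  have h2ρ : ¬ Contains ρ pone := not_contains_pone ρ (by omega)
  rw [mu, if_pos h1, if_neg h2]
  rw [Finset.sum_attach (Finset.range (n' + 1))
    (fun mm => ∑ τ : Perm (Fin mm), if Contains pone τ ∧ Contains τ π then mu pone mm τ else 0)]
  have hcongr : ∀ mm ∈ Finset.range (n' + 1),
      (∑ τ : Perm (Fin mm), if Contains pone τ ∧ Contains τ π then mu pone mm τ else 0)
      = (∑ τ : Perm (Fin mm), if Contains pone τ ∧ Contains τ ρ then mu pone mm τ else 0) := by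
    intro mm hmm
    rw [Finset.mem_range] at hmm
    refine Finset.sum_congr rfl (fun τ _ => ?_)
    by_cases hμ : mu pone mm τ = 0
    · rw [hμ]
      simp only [ite_self]
    · have hiff : (Contains pone τ ∧ Contains τ π) ↔ (Contains pone τ ∧ Contains τ ρ) := by
        constructor
        · rintro ⟨hp, hc⟩; exact ⟨hp, habs mm hmm τ hc hμ⟩
        · rintro ⟨hp, hc⟩; exact ⟨hp, contains_trans hc hρπ⟩
      rw [if_congr hiff rfl rfl]
  rw [Finset.sum_congr rfl hcongr, Finset.sum_range_succ]
  have hlast : (∑ τ : Perm (Fin n'), if Contains pone τ ∧ Contains τ ρ then mu pone n' τ else 0)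
      = mu pone n' ρ := by
    rw [Finset.sum_eq_single ρ]
    · rw [if_pos ⟨h1ρ, contains_refl ρ⟩]
    · intro τ _ hτ
      rw [if_neg]
      rintro ⟨-, hc⟩
      exact hτ (contains_same_length hc)
    · intro hρu; exact absurd (Finset.mem_univ ρ) hρu
  have hrest : (∑ mm ∈ Finset.range n', ∑ τ : Perm (Fin mm),
      if Contains pone τ ∧ Contains τ ρ then mu pone mm τ else 0) = - mu pone n' ρ := by
    have := mu.eq_1 pone n' ρ
    rw [if_pos h1ρ, if_neg h2ρ] at this
    rw [Finset.sum_attach (Finset.range n')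
      (fun mm => ∑ τ : Perm (Fin mm), if Contains pone τ ∧ Contains τ ρ then mu pone mm τ else 0)] at this
    omega
  rw [hlast, hrest]
  ring

end PF
namespace PF
open Equiv Finset

set_option maxRecDepth 10000

noncomputable def p213 : Perm (Fin 3) := Equiv.ofBijective ![1, 0, 2] (by decide)
noncomputable def p2134 : Perm (Fin 4) := Equiv.ofBijective ![1, 0, 2, 3] (by decide)

-- deletion pattern facts
lemma hψ123 : ∀ j : Fin 2, (p12 j).val
    = dval (p123 (⟨1, by omega⟩ : Fin 3)).val (p123 ((⟨1, by omega⟩ : Fin 3).succAbove j)).val := by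
  decide
lemma hψ1243 : ∀ j : Fin 3, (p132 j).val
    = dval (p1243 (⟨0, by omega⟩ : Fin 4)).val (p1243 ((⟨0, by omega⟩ : Fin 4).succAbove j)).val := by
  decide
lemma hψ2134 : ∀ j : Fin 3, (p213 j).val
    = dval (p2134 (⟨3, by omega⟩ : Fin 4)).val (p2134 ((⟨3, by omega⟩ : Fin 4).succAbove j)).val := by
  decide
lemma hψ21354 : ∀ j : Fin 4, (p2143 j).val
    = dval (p21354 (⟨2, by omega⟩ : Fin 5)).val (p21354 ((⟨2, by omega⟩ : Fin 5).succAbove j)).val := by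
  decide

-- classification lemmas for p123 (core p12)
lemma C123_0 : ∀ h : Fin 0 → Fin 3, StrictMono h → ∃ G : Fin 0 → Fin 2, StrictMono G ∧
    ∀ i j, (p123 (h i)).val < (p123 (h j)).val ↔ (p12 (G i)).val < (p12 (G j)).val := by decide
lemma C123_1 : ∀ h : Fin 1 → Fin 3, StrictMono h → ∃ G : Fin 1 → Fin 2, StrictMono G ∧
    ∀ i j, (p123 (h i)).val < (p123 (h j)).val ↔ (p12 (G i)).val < (p12 (G j)).val := by decide
lemma C123_2 : ∀ h : Fin 2 → Fin 3, StrictMono h → ∃ G : Fin 2 → Fin 2, StrictMono G ∧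
    ∀ i j, (p123 (h i)).val < (p123 (h j)).val ↔ (p12 (G i)).val < (p12 (G j)).val := by decide

-- classification lemmas for p1243 (core p132, zero pattern p123)
lemma C1243_0 : ∀ h : Fin 0 → Fin 4, StrictMono h → ∃ G : Fin 0 → Fin 3, StrictMono G ∧
    ∀ i j, (p1243 (h i)).val < (p1243 (h j)).val ↔ (p132 (G i)).val < (p132 (G j)).val := by decide
lemma C1243_1 : ∀ h : Fin 1 → Fin 4, StrictMono h → ∃ G : Fin 1 → Fin 3, StrictMono G ∧
    ∀ i j, (p1243 (h i)).val < (p1243 (h j)).val ↔ (p132 (G i)).val < (p132 (G j)).val := by decide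
lemma C1243_2 : ∀ h : Fin 2 → Fin 4, StrictMono h → ∃ G : Fin 2 → Fin 3, StrictMono G ∧
    ∀ i j, (p1243 (h i)).val < (p1243 (h j)).val ↔ (p132 (G i)).val < (p132 (G j)).val := by decide
lemma C1243_3 : ∀ h : Fin 3 → Fin 4, StrictMono h →
    (∃ G : Fin 3 → Fin 3, StrictMono G ∧
      ∀ i j, (p1243 (h i)).val < (p1243 (h j)).val ↔ (p132 (G i)).val < (p132 (G j)).val)
    ∨ (∀ i j : Fin 3, (p1243 (h i)).val < (p1243 (h j)).val ↔ (p123 i).val < (p123 j).val) := by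
  decide

-- classification lemmas for p2134 (core p213, zero pattern p123)
lemma C2134_0 : ∀ h : Fin 0 → Fin 4, StrictMono h → ∃ G : Fin 0 → Fin 3, StrictMono G ∧
    ∀ i j, (p2134 (h i)).val < (p2134 (h j)).val ↔ (p213 (G i)).val < (p213 (G j)).val := by decide
lemma C2134_1 : ∀ h : Fin 1 → Fin 4, StrictMono h → ∃ G : Fin 1 → Fin 3, StrictMono G ∧
    ∀ i j, (p2134 (h i)).val < (p2134 (h j)).val ↔ (p213 (G i)).val < (p213 (G j)).val := by decide
lemma C2134_2 : ∀ h : Fin 2 → Fin 4, StrictMono h → ∃ G : Fin 2 → Fin 3, StrictMono G ∧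
    ∀ i j, (p2134 (h i)).val < (p2134 (h j)).val ↔ (p213 (G i)).val < (p213 (G j)).val := by decide
lemma C2134_3 : ∀ h : Fin 3 → Fin 4, StrictMono h →
    (∃ G : Fin 3 → Fin 3, StrictMono G ∧
      ∀ i j, (p2134 (h i)).val < (p2134 (h j)).val ↔ (p213 (G i)).val < (p213 (G j)).val)
    ∨ (∀ i j : Fin 3, (p2134 (h i)).val < (p2134 (h j)).val ↔ (p123 i).val < (p123 j).val) := by
  decide

-- classification lemmas for p21354 (core p2143, zero patterns p123, p2134, p1243)
lemma C21354_0 : ∀ h : Fin 0 → Fin 5, StrictMono h → ∃ G : Fin 0 → Fin 4, StrictMono G ∧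
    ∀ i j, (p21354 (h i)).val < (p21354 (h j)).val ↔ (p2143 (G i)).val < (p2143 (G j)).val := by
  decide
lemma C21354_1 : ∀ h : Fin 1 → Fin 5, StrictMono h → ∃ G : Fin 1 → Fin 4, StrictMono G ∧
    ∀ i j, (p21354 (h i)).val < (p21354 (h j)).val ↔ (p2143 (G i)).val < (p2143 (G j)).val := by
  decide
lemma C21354_2 : ∀ h : Fin 2 → Fin 5, StrictMono h → ∃ G : Fin 2 → Fin 4, StrictMono G ∧
    ∀ i j, (p21354 (h i)).val < (p21354 (h j)).val ↔ (p2143 (G i)).val < (p2143 (G j)).val := by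
  decide
lemma C21354_3 : ∀ h : Fin 3 → Fin 5, StrictMono h →
    (∃ G : Fin 3 → Fin 4, StrictMono G ∧
      ∀ i j, (p21354 (h i)).val < (p21354 (h j)).val ↔ (p2143 (G i)).val < (p2143 (G j)).val)
    ∨ (∀ i j : Fin 3, (p21354 (h i)).val < (p21354 (h j)).val ↔ (p123 i).val < (p123 j).val) := by
  decide
lemma C21354_4 : ∀ h : Fin 4 → Fin 5, StrictMono h →
    (∃ G : Fin 4 → Fin 4, StrictMono G ∧
      ∀ i j, (p21354 (h i)).val < (p21354 (h j)).val ↔ (p2143 (G i)).val < (p2143 (G j)).val)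
    ∨ (∀ i j : Fin 4, (p21354 (h i)).val < (p21354 (h j)).val ↔ (p2134 i).val < (p2134 j).val)
    ∨ (∀ i j : Fin 4, (p21354 (h i)).val < (p21354 (h j)).val ↔ (p1243 i).val < (p1243 j).val) := by
  decide

end PF
namespace PF
open Equiv Finset

lemma T1 : ∀ N : ℕ, ∀ π : Perm (Fin N), HasIntervalIso π p123 → mu pone N π = 0 := by
  intro N
  induction N using Nat.strong_induction_on with
  | _ N IH =>
    rintro π ⟨s, b, hs, hbl⟩
    obtain ⟨n', rfl⟩ : ∃ n', N = n' + 1 := ⟨N - 1, by omega⟩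
    have hn' : 2 ≤ n' := by omega
    apply master π (delPerm π ⟨s + 1, by omega⟩) hn' (contains_delPerm π _)
    intro L hL lam hcont hμ
    obtain ⟨f, hf⟩ := hcont
    obtain ⟨a, t, c, h, htm, hatL, hmono, hA, hA', he', hrank⟩ :=
      induced_block hs hbl (⇑f) f.strictMono hf
    rcases Nat.lt_or_ge t 3 with ht | ht
    · interval_cases t
      · obtain ⟨G, hG, hGp⟩ := C123_0 h hmono
        exact transplant (k := 1) (by omega) hs hbl hψ123 f.strictMono hf hatL hA hA' he' hG hGp
      · obtain ⟨G, hG, hGp⟩ := C123_1 h hmono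
        exact transplant (k := 1) (by omega) hs hbl hψ123 f.strictMono hf hatL hA hA' he' hG hGp
      · obtain ⟨G, hG, hGp⟩ := C123_2 h hmono
        exact transplant (k := 1) (by omega) hs hbl hψ123 f.strictMono hf hatL hA hA' he' hG hGp
    · have ht3 : t = 3 := by omega
      subst ht3
      have hid := strictMono_fin_id hmono
      have hiso : HasIntervalIso lam p123 := by
        refine ⟨a, c, by omega, ?_⟩
        intro j hj
        exact hrank p123 (fun i j => by rw [hid i, hid j, Fin.lt_def]) j hj
      exact absurd (IH L hL lam hiso) hμ

lemma T2 : ∀ N : ℕ, ∀ π : Perm (Fin N), HasIntervalIso π p1243 → mu pone N π = 0 := by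
  intro N
  induction N using Nat.strong_induction_on with
  | _ N IH =>
    rintro π ⟨s, b, hs, hbl⟩
    obtain ⟨n', rfl⟩ : ∃ n', N = n' + 1 := ⟨N - 1, by omega⟩
    have hn' : 2 ≤ n' := by omega
    apply master π (delPerm π ⟨s + 0, by omega⟩) hn' (contains_delPerm π _)
    intro L hL lam hcont hμ
    obtain ⟨f, hf⟩ := hcont
    obtain ⟨a, t, c, h, htm, hatL, hmono, hA, hA', he', hrank⟩ :=
      induced_block hs hbl (⇑f) f.strictMono hf
    rcases Nat.lt_or_ge t 4 with ht | ht
    · interval_cases t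
      · obtain ⟨G, hG, hGp⟩ := C1243_0 h hmono
        exact transplant (k := 0) (by omega) hs hbl hψ1243 f.strictMono hf hatL hA hA' he' hG hGp
      · obtain ⟨G, hG, hGp⟩ := C1243_1 h hmono
        exact transplant (k := 0) (by omega) hs hbl hψ1243 f.strictMono hf hatL hA hA' he' hG hGp
      · obtain ⟨G, hG, hGp⟩ := C1243_2 h hmono
        exact transplant (k := 0) (by omega) hs hbl hψ1243 f.strictMono hf hatL hA hA' he' hG hGp
      · rcases C1243_3 h hmono with ⟨G, hG, hGp⟩ | hz
        · exact transplant (k := 0) (by omega) hs hbl hψ1243 f.strictMono hf hatL hA hA' he' hG hGp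
        · have hiso : HasIntervalIso lam p123 := by
            refine ⟨a, c, by omega, ?_⟩
            intro j hj
            exact hrank p123 (fun i j => by rw [Fin.lt_def, hz i j]) j hj
          exact absurd (T1 L lam hiso) hμ
    · have ht4 : t = 4 := by omega
      subst ht4
      have hid := strictMono_fin_id hmono
      have hiso : HasIntervalIso lam p1243 := by
        refine ⟨a, c, by omega, ?_⟩
        intro j hj
        exact hrank p1243 (fun i j => by rw [hid i, hid j, Fin.lt_def]) j hj
      exact absurd (IH L hL lam hiso) hμ

lemma T3 : ∀ N : ℕ, ∀ π : Perm (Fin N), HasIntervalIso π p2134 → mu pone N π = 0 := by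
  intro N
  induction N using Nat.strong_induction_on with
  | _ N IH =>
    rintro π ⟨s, b, hs, hbl⟩
    obtain ⟨n', rfl⟩ : ∃ n', N = n' + 1 := ⟨N - 1, by omega⟩
    have hn' : 2 ≤ n' := by omega
    apply master π (delPerm π ⟨s + 3, by omega⟩) hn' (contains_delPerm π _)
    intro L hL lam hcont hμ
    obtain ⟨f, hf⟩ := hcont
    obtain ⟨a, t, c, h, htm, hatL, hmono, hA, hA', he', hrank⟩ :=
      induced_block hs hbl (⇑f) f.strictMono hf
    rcases Nat.lt_or_ge t 4 with ht | ht
    · interval_cases t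
      · obtain ⟨G, hG, hGp⟩ := C2134_0 h hmono
        exact transplant (k := 3) (by omega) hs hbl hψ2134 f.strictMono hf hatL hA hA' he' hG hGp
      · obtain ⟨G, hG, hGp⟩ := C2134_1 h hmono
        exact transplant (k := 3) (by omega) hs hbl hψ2134 f.strictMono hf hatL hA hA' he' hG hGp
      · obtain ⟨G, hG, hGp⟩ := C2134_2 h hmono
        exact transplant (k := 3) (by omega) hs hbl hψ2134 f.strictMono hf hatL hA hA' he' hG hGp
      · rcases C2134_3 h hmono with ⟨G, hG, hGp⟩ | hz
        · exact transplant (k := 3) (by omega) hs hbl hψ2134 f.strictMono hf hatL hA hA' he' hG hGp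
        · have hiso : HasIntervalIso lam p123 := by
            refine ⟨a, c, by omega, ?_⟩
            intro j hj
            exact hrank p123 (fun i j => by rw [Fin.lt_def, hz i j]) j hj
          exact absurd (T1 L lam hiso) hμ
    · have ht4 : t = 4 := by omega
      subst ht4
      have hid := strictMono_fin_id hmono
      have hiso : HasIntervalIso lam p2134 := by
        refine ⟨a, c, by omega, ?_⟩
        intro j hj
        exact hrank p2134 (fun i j => by rw [hid i, hid j, Fin.lt_def]) j hj
      exact absurd (IH L hL lam hiso) hμ

lemma TMain : ∀ N : ℕ, ∀ π : Perm (Fin N), HasIntervalIso π p21354 → mu pone N π = 0 := by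
  intro N
  induction N using Nat.strong_induction_on with
  | _ N IH =>
    rintro π ⟨s, b, hs, hbl⟩
    obtain ⟨n', rfl⟩ : ∃ n', N = n' + 1 := ⟨N - 1, by omega⟩
    have hn' : 2 ≤ n' := by omega
    apply master π (delPerm π ⟨s + 2, by omega⟩) hn' (contains_delPerm π _)
    intro L hL lam hcont hμ
    obtain ⟨f, hf⟩ := hcont
    obtain ⟨a, t, c, h, htm, hatL, hmono, hA, hA', he', hrank⟩ :=
      induced_block hs hbl (⇑f) f.strictMono hf
    rcases Nat.lt_or_ge t 5 with ht | ht
    · interval_cases t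
      · obtain ⟨G, hG, hGp⟩ := C21354_0 h hmono
        exact transplant (k := 2) (by omega) hs hbl hψ21354 f.strictMono hf hatL hA hA' he' hG hGp
      · obtain ⟨G, hG, hGp⟩ := C21354_1 h hmono
        exact transplant (k := 2) (by omega) hs hbl hψ21354 f.strictMono hf hatL hA hA' he' hG hGp
      · obtain ⟨G, hG, hGp⟩ := C21354_2 h hmono
        exact transplant (k := 2) (by omega) hs hbl hψ21354 f.strictMono hf hatL hA hA' he' hG hGp
      · rcases C21354_3 h hmono with ⟨G, hG, hGp⟩ | hz
        · exact transplant (k := 2) (by omega) hs hbl hψ21354 f.strictMono hf hatL hA hA' he' hG hGp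
        · have hiso : HasIntervalIso lam p123 := by
            refine ⟨a, c, by omega, ?_⟩
            intro j hj
            exact hrank p123 (fun i j => by rw [Fin.lt_def, hz i j]) j hj
          exact absurd (T1 L lam hiso) hμ
      · rcases C21354_4 h hmono with ⟨G, hG, hGp⟩ | hz | hz
        · exact transplant (k := 2) (by omega) hs hbl hψ21354 f.strictMono hf hatL hA hA' he' hG hGp
        · have hiso : HasIntervalIso lam p2134 := by
            refine ⟨a, c, by omega, ?_⟩
            intro j hj
            exact hrank p2134 (fun i j => by rw [Fin.lt_def, hz i j]) j hj
          exact absurd (T3 L lam hiso) hμ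
        · have hiso : HasIntervalIso lam p1243 := by
            refine ⟨a, c, by omega, ?_⟩
            intro j hj
            exact hrank p1243 (fun i j => by rw [Fin.lt_def, hz i j]) j hj
          exact absurd (T2 L lam hiso) hμ
    · have ht5 : t = 5 := by omega
      subst ht5
      have hid := strictMono_fin_id hmono
      have hiso : HasIntervalIso lam p21354 := by
        refine ⟨a, c, by omega, ?_⟩
        intro j hj
        exact hrank p21354 (fun i j => by rw [hid i, hid j, Fin.lt_def]) j hj
      exact absurd (IH L hL lam hiso) hμ

lemma iso_self {n : ℕ} (π : Perm (Fin n)) : HasIntervalIso π π := by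
  refine ⟨0, 0, by omega, ?_⟩
  intro j hj
  have h2 : π ⟨0 + j.val, hj⟩ = π j := by
    congr 1
    exact Fin.ext (show 0 + j.val = j.val by omega)
  rw [h2]
  omega

lemma mu21354 : mu pone 5 p21354 = 0 := TMain 5 p21354 (iso_self p21354)

end PF
namespace PF
open Equiv Finset

lemma sz123 : (⟨3, p123⟩ : SigmaPerm) ∈ SZ := fun N π h => T1 N π h
lemma sz1243 : (⟨4, p1243⟩ : SigmaPerm) ∈ SZ := fun N π h => T2 N π h
lemma sz2134 : (⟨4, p2134⟩ : SigmaPerm) ∈ SZ := fun N π h => T3 N π h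

lemma not_contains_lt {k n : ℕ} (σ : Perm (Fin k)) (π : Perm (Fin n)) (h : n < k) :
    ¬ Contains σ π := fun hc => absurd (contains_card_le hc) (by omega)

lemma contains_of_pat {t q : ℕ} {τ : Perm (Fin t)} {σ : Perm (Fin q)}
    (G : Fin t → Fin q) (hG : StrictMono G)
    (hp : ∀ i j, τ i < τ j ↔ (σ (G i)).val < (σ (G j)).val) : Contains τ σ := by
  refine ⟨OrderEmbedding.ofStrictMono G hG, fun i j => ?_⟩
  simp only [OrderEmbedding.coe_ofStrictMono]
  rw [hp i j, Fin.lt_def]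

lemma perm_eq_of_pat {t : ℕ} {τ σ : Perm (Fin t)}
    (hp : ∀ i j, τ i < τ j ↔ (σ i).val < (σ j).val) : τ = σ :=
  perm_det (fun i j => (hp i j).trans (Fin.lt_def).symm)

set_option maxRecDepth 10000 in
lemma c2143_21354 : Contains p2143 p21354 := by
  refine ⟨OrderEmbedding.ofStrictMono ![0, 1, 3, 4] (by decide), ?_⟩
  simp only [OrderEmbedding.coe_ofStrictMono]
  decide

set_option maxRecDepth 10000 in
lemma c2134_21354 : Contains p2134 p21354 := by
  refine ⟨OrderEmbedding.ofStrictMono ![0, 1, 2, 3] (by decide), ?_⟩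
  simp only [OrderEmbedding.coe_ofStrictMono]
  decide

set_option maxRecDepth 10000 in
lemma c1243_21354 : Contains p1243 p21354 := by
  refine ⟨OrderEmbedding.ofStrictMono ![1, 2, 3, 4] (by decide), ?_⟩
  simp only [OrderEmbedding.coe_ofStrictMono]
  decide

set_option maxRecDepth 10000 in
lemma c132_2143 : Contains p132 p2143 := by
  refine ⟨OrderEmbedding.ofStrictMono ![0, 2, 3] (by decide), ?_⟩
  simp only [OrderEmbedding.coe_ofStrictMono]
  decide

set_option maxRecDepth 10000 in
lemma c213_2143 : Contains p213 p2143 := by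
  refine ⟨OrderEmbedding.ofStrictMono ![0, 1, 2] (by decide), ?_⟩
  simp only [OrderEmbedding.coe_ofStrictMono]
  decide

set_option maxRecDepth 10000 in
lemma c123_2134 : Contains p123 p2134 := by
  refine ⟨OrderEmbedding.ofStrictMono ![1, 2, 3] (by decide), ?_⟩
  simp only [OrderEmbedding.coe_ofStrictMono]
  decide

lemma coreMem : (⟨4, p2143⟩ : SigmaPerm) ∈ permCover ⟨5, p21354⟩ := by
  constructor
  · exact ⟨c2143_21354, not_contains_lt _ _ (by decide)⟩
  · rintro ⟨⟨m, τ⟩, ⟨h1a, h1b⟩, h2a, h2b⟩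
    have hm1 : 4 ≤ m := contains_card_le h1a
    have hm2 : m ≤ 5 := contains_card_le h2a
    interval_cases m
    · obtain rfl := contains_same_length h1a
      exact h1b (contains_refl _)
    · obtain rfl := contains_same_length h2a
      exact h2b (contains_refl _)

/-- every cover element is one of the three length-4 patterns -/
lemma coverChar : ∀ l ∈ permCover (⟨5, p21354⟩ : SigmaPerm),
    l = ⟨4, p2143⟩ ∨ l = ⟨4, p2134⟩ ∨ l = ⟨4, p1243⟩ := by
  rintro ⟨m, τ⟩ ⟨⟨h1, h2⟩, hno⟩
  have hm : m ≤ 5 := contains_card_le h1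
  obtain ⟨g, hg⟩ := h1
  rcases Nat.lt_or_ge m 4 with hm4 | hm4
  · -- lengths ≤ 3 cannot be covers: there is an intermediate
    exfalso
    apply hno
    have hmid : Contains τ p2143 ∨ Contains τ p2134 := by
      interval_cases m
      · obtain ⟨G, hG, hGp⟩ := C21354_0 (⇑g) g.strictMono
        exact Or.inl (contains_of_pat G hG
          (fun i j => (hg i j).trans ((Fin.lt_def).trans (hGp i j))))
      · obtain ⟨G, hG, hGp⟩ := C21354_1 (⇑g) g.strictMono
        exact Or.inl (contains_of_pat G hG
          (fun i j => (hg i j).trans ((Fin.lt_def).trans (hGp i j))))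
      · obtain ⟨G, hG, hGp⟩ := C21354_2 (⇑g) g.strictMono
        exact Or.inl (contains_of_pat G hG
          (fun i j => (hg i j).trans ((Fin.lt_def).trans (hGp i j))))
      · rcases C21354_3 (⇑g) g.strictMono with ⟨G, hG, hGp⟩ | hz
        · exact Or.inl (contains_of_pat G hG
            (fun i j => (hg i j).trans ((Fin.lt_def).trans (hGp i j))))
        · have hτ : τ = p123 := perm_eq_of_pat
            (fun i j => (hg i j).trans ((Fin.lt_def).trans (hz i j)))
          rw [hτ]
          exact Or.inr c123_2134
    rcases hmid with hc | hc
    · exact ⟨⟨4, p2143⟩, ⟨hc, not_contains_lt _ _ (show m < 4 from hm4)⟩,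
        c2143_21354, not_contains_lt _ _ (by decide)⟩
    · exact ⟨⟨4, p2134⟩, ⟨hc, not_contains_lt _ _ (show m < 4 from hm4)⟩,
        c2134_21354, not_contains_lt _ _ (by decide)⟩
  · rcases Nat.lt_or_ge m 5 with hm5 | hm5
    · have hm4' : m = 4 := by omega
      subst hm4'
      rcases C21354_4 (⇑g) g.strictMono with ⟨G, hG, hGp⟩ | hz | hz
      · left
        have hid := strictMono_fin_id hG
        have hτ : τ = p2143 := perm_eq_of_pat (fun i j => by
          have := (hg i j).trans ((Fin.lt_def).trans (hGp i j))
          rwa [hid i, hid j] at this)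
        rw [hτ]
      · right; left
        have hτ : τ = p2134 := perm_eq_of_pat
          (fun i j => (hg i j).trans ((Fin.lt_def).trans (hz i j)))
        rw [hτ]
      · right; right
        have hτ : τ = p1243 := perm_eq_of_pat
          (fun i j => (hg i j).trans ((Fin.lt_def).trans (hz i j)))
        rw [hτ]
    · exfalso
      have hm5' : m = 5 := by omega
      subst hm5'
      obtain rfl := contains_same_length ⟨g, hg⟩
      exact h2 (contains_refl _)

/-- anything contained in p1243 either is strongly zero or is contained in p2143 -/
lemma closure1243 {u : ℕ} (ξ : Perm (Fin u)) (hc : Contains ξ p1243)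
    (hnsz : (⟨u, ξ⟩ : SigmaPerm) ∉ SZ) : Contains ξ p2143 := by
  have hu : u ≤ 4 := contains_card_le hc
  obtain ⟨g, hg⟩ := hc
  interval_cases u
  · obtain ⟨G, hG, hGp⟩ := C1243_0 (⇑g) g.strictMono
    exact contains_trans (contains_of_pat G hG
      (fun i j => (hg i j).trans ((Fin.lt_def).trans (hGp i j)))) c132_2143
  · obtain ⟨G, hG, hGp⟩ := C1243_1 (⇑g) g.strictMono
    exact contains_trans (contains_of_pat G hG
      (fun i j => (hg i j).trans ((Fin.lt_def).trans (hGp i j)))) c132_2143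
  · obtain ⟨G, hG, hGp⟩ := C1243_2 (⇑g) g.strictMono
    exact contains_trans (contains_of_pat G hG
      (fun i j => (hg i j).trans ((Fin.lt_def).trans (hGp i j)))) c132_2143
  · rcases C1243_3 (⇑g) g.strictMono with ⟨G, hG, hGp⟩ | hz
    · exact contains_trans (contains_of_pat G hG
        (fun i j => (hg i j).trans ((Fin.lt_def).trans (hGp i j)))) c132_2143
    · have hτ : ξ = p123 := perm_eq_of_pat
        (fun i j => (hg i j).trans ((Fin.lt_def).trans (hz i j)))
      subst hτ
      exact absurd sz123 hnsz
  · have hid := strictMono_fin_id g.strictMono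
    have hτ : ξ = p1243 := perm_eq_of_pat (fun i j => by
      have := (hg i j).trans (Fin.lt_def)
      rwa [hid i, hid j] at this)
    subst hτ
    exact absurd sz1243 hnsz

lemma closure2134 {u : ℕ} (ξ : Perm (Fin u)) (hc : Contains ξ p2134)
    (hnsz : (⟨u, ξ⟩ : SigmaPerm) ∉ SZ) : Contains ξ p2143 := by
  have hu : u ≤ 4 := contains_card_le hc
  obtain ⟨g, hg⟩ := hc
  interval_cases u
  · obtain ⟨G, hG, hGp⟩ := C2134_0 (⇑g) g.strictMono
    exact contains_trans (contains_of_pat G hG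
      (fun i j => (hg i j).trans ((Fin.lt_def).trans (hGp i j)))) c213_2143
  · obtain ⟨G, hG, hGp⟩ := C2134_1 (⇑g) g.strictMono
    exact contains_trans (contains_of_pat G hG
      (fun i j => (hg i j).trans ((Fin.lt_def).trans (hGp i j)))) c213_2143
  · obtain ⟨G, hG, hGp⟩ := C2134_2 (⇑g) g.strictMono
    exact contains_trans (contains_of_pat G hG
      (fun i j => (hg i j).trans ((Fin.lt_def).trans (hGp i j)))) c213_2143
  · rcases C2134_3 (⇑g) g.strictMono with ⟨G, hG, hGp⟩ | hz
    · exact contains_trans (contains_of_pat G hG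
        (fun i j => (hg i j).trans ((Fin.lt_def).trans (hGp i j)))) c213_2143
    · have hτ : ξ = p123 := perm_eq_of_pat
        (fun i j => (hg i j).trans ((Fin.lt_def).trans (hz i j)))
      subst hτ
      exact absurd sz123 hnsz
  · have hid := strictMono_fin_id g.strictMono
    have hτ : ξ = p2134 := perm_eq_of_pat (fun i j => by
      have := (hg i j).trans (Fin.lt_def)
      rwa [hid i, hid j] at this)
    subst hτ
    exact absurd sz2134 hnsz

lemma groundIncl :
    permGround (permCover ⟨5, p21354⟩ \ {⟨4, p2143⟩}) ⊆ permClosure ⟨4, p2143⟩ := by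
  rintro ⟨u, ξ⟩ ⟨hmem, hnsz⟩
  simp only [Set.mem_iUnion] at hmem
  obtain ⟨l, hl, hxl⟩ := hmem
  obtain ⟨hl1, hl2⟩ := hl
  rcases coverChar l hl1 with rfl | rfl | rfl
  · exact absurd rfl hl2
  · exact closure2134 ξ hxl hnsz
  · exact closure1243 ξ hxl hnsz

end PF
theorem p21354_nice :
    IsCore ⟨4, p2143⟩ ⟨5, p21354⟩ ∧ mu pone 5 p21354 = 0 ∧ Nice ⟨5, p21354⟩ := by
  have hcore : IsCore ⟨4, p2143⟩ ⟨5, p21354⟩ := ⟨PF.coreMem, PF.groundIncl⟩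
  exact ⟨hcore, PF.mu21354, PF.mu21354, ⟨4, p2143⟩, hcore⟩
end

section
/- Let π be a permutation of length n > 2 with π_1 = 1 and π_2 = 2. Then μ(1, π) = 0. -/
open scoped Classical

lemma contains_refl {n : ℕ} (π : Equiv.Perm (Fin n)) : Contains π π :=
  ⟨(OrderIso.refl (Fin n)).toOrderEmbedding, fun _ _ => Iff.rfl⟩

lemma contains_card_le {k n : ℕ} {σ : Equiv.Perm (Fin k)} {π : Equiv.Perm (Fin n)}
    (h : Contains σ π) : k ≤ n := by
  obtain ⟨f, -⟩ := h
  simpa using Fintype.card_le_of_embedding f.toEmbedding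

lemma contains_pone {n : ℕ} (π : Equiv.Perm (Fin (n+1))) : Contains pone π := by
  refine ⟨OrderEmbedding.ofStrictMono (fun _ => 0) ?_, ?_⟩
  · intro i j h; exact absurd (Subsingleton.elim i j) (ne_of_lt h)
  · intro i j
    have : i = j := Subsingleton.elim i j
    subst this; simp

lemma not_contains_pone {n : ℕ} (π : Equiv.Perm (Fin n)) (hn : 2 ≤ n) :
    ¬ Contains π pone := fun h => by have := contains_card_le h; omega

lemma orderEmbedding_fin_self_eq {n : ℕ} (f : Fin n ↪o Fin n) (i : Fin n) : f i = i := by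
  have hsurj : Function.Surjective f := Finite.surjective_of_injective f.injective
  let e : Fin n ≃o Fin n := StrictMono.orderIsoOfSurjective f f.strictMono hsurj
  have : e = OrderIso.refl (Fin n) := Subsingleton.elim _ _
  have h2 : e i = i := by rw [this]; rfl
  exact h2

lemma contains_eq {n : ℕ} {σ π : Equiv.Perm (Fin n)} (h : Contains σ π) : σ = π := by
  obtain ⟨f, hf⟩ := h
  have hf' : ∀ i j, σ i < σ j ↔ π i < π j := by
    intro i j; simpa [orderEmbedding_fin_self_eq f] using hf i j
  have hmono : StrictMono (fun x => π (σ.symm x)) := by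
    intro a b hab
    have := (hf' (σ.symm a) (σ.symm b)).mp (by simpa using hab)
    simpa using this
  have hid : ∀ x, π (σ.symm x) = x := fun x =>
    orderEmbedding_fin_self_eq (OrderEmbedding.ofStrictMono _ hmono) x
  ext i
  have := hid (σ i)
  simp only [Equiv.symm_apply_apply] at this
  simp [this]

noncomputable def paddOne {m : ℕ} (σ : Equiv.Perm (Fin m)) : Equiv.Perm (Fin (m+1)) :=
  Equiv.Perm.decomposeFin.symm (0, σ)

noncomputable def premove {m : ℕ} (π : Equiv.Perm (Fin (m+1))) : Equiv.Perm (Fin m) :=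
  (Equiv.Perm.decomposeFin π).2

lemma paddOne_zero {m : ℕ} (σ : Equiv.Perm (Fin m)) : paddOne σ 0 = 0 := by
  simp [paddOne]

lemma paddOne_succ {m : ℕ} (σ : Equiv.Perm (Fin m)) (i : Fin m) :
    paddOne σ i.succ = (σ i).succ := by
  simp [paddOne, Equiv.Perm.decomposeFin_symm_apply_succ]

lemma paddOne_premove {m : ℕ} (π : Equiv.Perm (Fin (m+1))) (h : π 0 = 0) :
    paddOne (premove π) = π := by
  have h1 : (Equiv.Perm.decomposeFin π).1 = 0 := by
    have := Equiv.Perm.decomposeFin.symm_apply_apply π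
    have h2 : π 0 = (Equiv.Perm.decomposeFin π).1 := by
      conv_lhs => rw [← this]
      exact Equiv.Perm.decomposeFin_symm_apply_zero (p := (Equiv.Perm.decomposeFin π).1)
        (e := (Equiv.Perm.decomposeFin π).2)
    rw [← h2, h]
  have : Equiv.Perm.decomposeFin π = (0, premove π) := by
    rw [Prod.ext_iff]; exact ⟨h1, rfl⟩
  calc paddOne (premove π) = Equiv.Perm.decomposeFin.symm (Equiv.Perm.decomposeFin π) := by
        rw [this]; rfl
    _ = π := Equiv.Perm.decomposeFin.symm_apply_apply π

lemma contains_paddOne {k M : ℕ} {τ : Equiv.Perm (Fin k)} {π : Equiv.Perm (Fin M)}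
    (h : Contains τ π) : Contains τ (paddOne π) := by
  obtain ⟨f, hf⟩ := h
  refine ⟨OrderEmbedding.ofStrictMono (fun i => (f i).succ)
    (fun a b hab => Fin.succ_lt_succ_iff.mpr (f.strictMono hab)), fun i j => ?_⟩
  change τ i < τ j ↔ paddOne π (f i).succ < paddOne π (f j).succ
  rw [paddOne_succ, paddOne_succ]
  rw [Fin.succ_lt_succ_iff]
  exact hf i j

lemma paddOne_contains_paddOne {k M : ℕ} {τ : Equiv.Perm (Fin k)} {π : Equiv.Perm (Fin M)}
    (h : Contains τ π) : Contains (paddOne τ) (paddOne π) := by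
  obtain ⟨f, hf⟩ := h
  refine ⟨OrderEmbedding.ofStrictMono
    (fun i => Fin.cases 0 (fun i' => (f i').succ) i) ?_, fun i j => ?_⟩
  · intro a b hab
    induction b using Fin.cases with
    | zero => exact absurd hab (Fin.not_lt_zero a)
    | succ b' =>
      induction a using Fin.cases with
      | zero => simp [Fin.succ_pos]
      | succ a' =>
        simp only [Fin.cases_succ]
        exact Fin.succ_lt_succ_iff.mpr (f.strictMono (by simpa [Fin.succ_lt_succ_iff] using hab))
  · change paddOne τ i < paddOne τ j ↔
      paddOne π (Fin.cases (motive := fun _ => Fin (M+1)) 0 (fun i' => (f i').succ) i) <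
      paddOne π (Fin.cases (motive := fun _ => Fin (M+1)) 0 (fun i' => (f i').succ) j)
    induction i using Fin.cases with
    | zero =>
      induction j using Fin.cases with
      | zero => simp
      | succ j' =>
        simp only [Fin.cases_zero, Fin.cases_succ, paddOne_zero, paddOne_succ]
        simp [Fin.succ_pos]
    | succ i' =>
      induction j using Fin.cases with
      | zero =>
        simp only [Fin.cases_zero, Fin.cases_succ, paddOne_zero, paddOne_succ]
        simp [Fin.not_lt_zero]
      | succ j' =>
        simp only [Fin.cases_succ, paddOne_succ, Fin.succ_lt_succ_iff]
        exact hf i' j'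

lemma key_lemma {k M : ℕ} {τ : Equiv.Perm (Fin (k+1))} {π : Equiv.Perm (Fin M)}
    (h : Contains τ (paddOne π)) (hnc : ¬ Contains τ π) :
    τ 0 = 0 ∧ Contains (premove τ) π := by
  obtain ⟨f, hf⟩ := h
  by_cases hf0 : f 0 = 0
  · -- f 0 = 0 case
    have hne : ∀ i : Fin (k+1), i ≠ 0 → f i ≠ 0 := by
      intro i hi
      have : f 0 < f i := f.strictMono (Fin.pos_of_ne_zero hi)
      rw [hf0] at this
      exact Fin.pos_iff_ne_zero.mp this
    have hlt : ∀ i : Fin (k+1), i ≠ 0 → τ 0 < τ i := by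
      intro i hi
      rw [hf 0 i, hf0, paddOne_zero]
      have h1 : f i = ((f i).pred (hne i hi)).succ := (Fin.succ_pred _ _).symm
      rw [h1, paddOne_succ]
      exact Fin.succ_pos _
    have h0 : τ 0 = 0 := by
      by_contra hτ0
      have hj : τ.symm 0 ≠ 0 := by
        intro hj
        apply hτ0
        have := τ.apply_symm_apply 0
        rw [hj] at this
        exact this
      have := hlt (τ.symm 0) hj
      simp at this
    refine ⟨h0, ?_⟩
    have hτeq : paddOne (premove τ) = τ := paddOne_premove τ h0
    refine ⟨OrderEmbedding.ofStrictMono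
      (fun i => (f i.succ).pred (hne i.succ (Fin.succ_ne_zero i))) ?_, fun i j => ?_⟩
    · intro a b hab
      have h1 : f a.succ < f b.succ := f.strictMono (Fin.succ_lt_succ_iff.mpr hab)
      have ha : (f a.succ).val ≠ 0 := by
        exact fun h => hne a.succ (Fin.succ_ne_zero a) (Fin.ext h)
      simp only [Fin.lt_def, Fin.coe_pred] at *
      omega
    · change premove τ i < premove τ j ↔
        π ((f i.succ).pred (hne i.succ (Fin.succ_ne_zero i))) <
        π ((f j.succ).pred (hne j.succ (Fin.succ_ne_zero j)))
      have e1 : ∀ i : Fin k, τ i.succ = (premove τ i).succ := by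
        intro i
        conv_lhs => rw [← hτeq]
        rw [paddOne_succ]
      have e2 : ∀ i : Fin k, paddOne π (f i.succ)
          = (π ((f i.succ).pred (hne i.succ (Fin.succ_ne_zero i)))).succ := by
        intro i
        conv_lhs => rw [(Fin.succ_pred (f i.succ) (hne i.succ (Fin.succ_ne_zero i))).symm]
        rw [paddOne_succ]
      have := hf i.succ j.succ
      rw [e1 i, e1 j, e2 i, e2 j, Fin.succ_lt_succ_iff, Fin.succ_lt_succ_iff] at this
      exact this
  · -- f 0 ≠ 0 : τ is contained in π, contradiction
    exfalso
    apply hnc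
    have hne : ∀ i : Fin (k+1), f i ≠ 0 := by
      intro i
      have : f 0 ≤ f i := f.monotone (Fin.zero_le i)
      intro h0
      rw [h0] at this
      exact hf0 (Fin.le_zero_iff.mp this)
    refine ⟨OrderEmbedding.ofStrictMono (fun i => (f i).pred (hne i)) ?_, fun i j => ?_⟩
    · intro a b hab
      have h1 : f a < f b := f.strictMono hab
      have ha : (f a).val ≠ 0 := fun h => hne a (Fin.ext h)
      simp only [Fin.lt_def, Fin.coe_pred] at *
      omega
    · change τ i < τ j ↔ π ((f i).pred (hne i)) < π ((f j).pred (hne j))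
      have e2 : ∀ i : Fin (k+1), paddOne π (f i) = (π ((f i).pred (hne i))).succ := by
        intro i
        conv_lhs => rw [(Fin.succ_pred (f i) (hne i)).symm]
        rw [paddOne_succ]
      have := hf i j
      rw [e2 i, e2 j, Fin.succ_lt_succ_iff] at this
      exact this

noncomputable def Ssum (N : ℕ) {n : ℕ} (π : Equiv.Perm (Fin n)) : ℤ :=
  ∑ k ∈ Finset.range N, ∑ τ : Equiv.Perm (Fin k),
    if Contains pone τ ∧ Contains τ π then mu pone k τ else 0

lemma mu_rec {n : ℕ} (π : Equiv.Perm (Fin (n+2))) : mu pone (n+2) π = - Ssum (n+2) π := by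
  rw [mu]
  rw [if_pos (contains_pone π), if_neg (not_contains_pone π (by omega))]
  congr 1
  rw [Ssum]
  exact Finset.sum_attach (Finset.range (n+2)) (fun k => ∑ τ : Equiv.Perm (Fin k),
    if Contains pone τ ∧ Contains τ π then mu pone k τ else 0)

lemma contains_nil {n : ℕ} (τ : Equiv.Perm (Fin 0)) (ρ : Equiv.Perm (Fin n)) :
    Contains τ ρ :=
  ⟨OrderEmbedding.ofStrictMono Fin.elim0 (fun a => a.elim0), fun i => i.elim0⟩

lemma top_term {n : ℕ} (π : Equiv.Perm (Fin (n+1))) :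
    (∑ τ : Equiv.Perm (Fin (n+1)),
      if Contains pone τ ∧ Contains τ π then mu pone (n+1) τ else 0) = mu pone (n+1) π := by
  rw [Fintype.sum_eq_single π]
  · rw [if_pos ⟨contains_pone π, contains_refl π⟩]
  · intro τ hτ
    rw [if_neg]
    rintro ⟨-, hc⟩
    exact hτ (contains_eq hc)

lemma over_term {k n : ℕ} (π : Equiv.Perm (Fin n)) (h : n < k) :
    (∑ τ : Equiv.Perm (Fin k),
      if Contains pone τ ∧ Contains τ π then mu pone k τ else 0) = 0 := by
  apply Finset.sum_eq_zero
  intro τ _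
  rw [if_neg]
  rintro ⟨-, hc⟩
  exact absurd (contains_card_le hc) (by omega)

lemma Ssum_closed {n : ℕ} (π : Equiv.Perm (Fin (n+2))) : Ssum (n+3) π = 0 := by
  have h1 : Ssum (n+3) π = Ssum (n+2) π + _ := Finset.sum_range_succ _ (n+2)
  rw [h1, top_term π]
  have h2 := mu_rec π
  linarith

lemma Ssum_closed' {n : ℕ} (π : Equiv.Perm (Fin (n+2))) : Ssum (n+4) π = 0 := by
  have h1 : Ssum (n+4) π = Ssum (n+3) π + _ := Finset.sum_range_succ _ (n+3)
  rw [h1, Ssum_closed π, over_term π (by omega)]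
  ring

lemma diff_sum {m : ℕ} (pih : Equiv.Perm (Fin (m+2))) :
    (∑ k ∈ Finset.range (m+4), ∑ τ : Equiv.Perm (Fin k),
      if Contains pone τ ∧ Contains τ (paddOne pih) ∧ ¬ Contains τ pih
      then mu pone k τ else 0) = 0 := by
  have key : (∑ k ∈ Finset.range (m+4), ∑ τ : Equiv.Perm (Fin k),
      if Contains pone τ ∧ Contains τ (paddOne pih) ∧ ¬ Contains τ pih
      then mu pone k τ else 0) = Ssum (m+4) (paddOne pih) - Ssum (m+4) pih := by
    rw [Ssum, Ssum, ← Finset.sum_sub_distrib]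
    apply Finset.sum_congr rfl
    intro k _
    rw [← Finset.sum_sub_distrib]
    apply Finset.sum_congr rfl
    intro τ _
    have himp : Contains τ pih → Contains τ (paddOne pih) := contains_paddOne
    by_cases hA : Contains pone τ
    · by_cases hC : Contains τ pih
      · have hB : Contains τ (paddOne pih) := himp hC
        rw [if_neg (fun h => h.2.2 hC), if_pos ⟨hA, hB⟩, if_pos ⟨hA, hC⟩, sub_self]
      · by_cases hB : Contains τ (paddOne pih)
        · rw [if_pos ⟨hA, hB, hC⟩, if_pos ⟨hA, hB⟩, if_neg (fun h => hC h.2), sub_zero]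
        · rw [if_neg (fun h => hB h.2.1), if_neg (fun h => hB h.2),
            if_neg (fun h => hC h.2), sub_zero]
    · rw [if_neg (fun h => hA h.1), if_neg (fun h => hA h.1), if_neg (fun h => hA h.1), sub_zero]
  have e : (m:ℕ)+1+3 = m+4 := by omega
  have hA := Ssum_closed (n := m+1) (paddOne pih)
  rw [e] at hA
  rw [key, hA, Ssum_closed' pih, sub_self]

lemma main_lemma (m : ℕ) : ∀ π : Equiv.Perm (Fin (m+3)), π 0 = 0 → π 1 = 1 →
    mu pone (m+3) π = 0 := by
  induction m using Nat.strong_induction_on with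
  | _ m IH =>
  intro π h0 h1
  have hπ : paddOne (premove π) = π := paddOne_premove π h0
  set pih := premove π with hpihdef
  have hpih0 : pih 0 = 0 := by
    have hs := paddOne_succ pih 0
    rw [hπ, Fin.succ_zero_eq_one, h1] at hs
    exact Fin.succ_injective _ (by rw [Fin.succ_zero_eq_one]; exact hs.symm)
  have hρ : paddOne (premove pih) = pih := paddOne_premove pih hpih0
  set ρ := premove pih with hρdef
  have hdiff := diff_sum pih
  rw [hπ] at hdiff
  have hzero : ∀ k ∈ Finset.range (m+4), k ≠ m+3 →
      (∑ τ : Equiv.Perm (Fin k),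
        if Contains pone τ ∧ Contains τ π ∧ ¬ Contains τ pih
        then mu pone k τ else 0) = 0 := by
    intro k hk hkne
    apply Finset.sum_eq_zero
    intro τ _
    by_cases hcond : Contains pone τ ∧ Contains τ π ∧ ¬ Contains τ pih
    case neg => rw [if_neg hcond]
    rw [if_pos hcond]
    obtain ⟨hA, hB, hC⟩ := hcond
    have hk1 : 1 ≤ k := contains_card_le hA
    have hkle : k ≤ m + 2 := by have := Finset.mem_range.mp hk; omega
    obtain ⟨k', rfl⟩ : ∃ k', k = k' + 1 := ⟨k - 1, by omega⟩
    have hB' : Contains τ (paddOne pih) := by rw [hπ]; exact hB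
    obtain ⟨hτ0, hτ'⟩ := key_lemma hB' hC
    have hτeq : paddOne (premove τ) = τ := paddOne_premove τ hτ0
    have hnc' : ¬ Contains (premove τ) ρ := by
      intro hc
      apply hC
      have h5 := paddOne_contains_paddOne hc
      rw [hρ, hτeq] at h5
      exact h5
    obtain ⟨k'', rfl⟩ : ∃ j, k' = j + 1 := by
      cases k' with
      | zero => exact absurd (contains_nil (premove τ) ρ) hnc'
      | succ j => exact ⟨j, rfl⟩
    have hτ'2 : Contains (premove τ) (paddOne ρ) := by rw [hρ]; exact hτ'
    obtain ⟨hτ'0, -⟩ := key_lemma hτ'2 hnc'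
    obtain ⟨k3, rfl⟩ : ∃ j, k'' = j + 1 := by
      cases k'' with
      | zero =>
        have hp1 : premove τ = pone := Subsingleton.elim _ _
        rw [hp1] at hnc'
        exact absurd (contains_pone ρ) hnc'
      | succ j => exact ⟨j, rfl⟩
    have hτ1 : τ 1 = 1 := by
      conv_lhs => rw [← hτeq]
      rw [← Fin.succ_zero_eq_one, paddOne_succ, hτ'0]
    exact IH k3 (by omega) τ hτ0 hτ1
  have hlast : (∑ τ : Equiv.Perm (Fin (m+3)),
      if Contains pone τ ∧ Contains τ π ∧ ¬ Contains τ pih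
      then mu pone (m+3) τ else 0) = mu pone (m+3) π := by
    rw [Fintype.sum_eq_single π]
    · rw [if_pos ⟨contains_pone (n := m+2) π, contains_refl π,
        fun hc => absurd (contains_card_le hc) (by omega)⟩]
    · intro τ hτ
      rw [if_neg]
      rintro ⟨-, hc, -⟩
      exact hτ (contains_eq hc)
  rw [Finset.sum_eq_single_of_mem (m+3) (Finset.mem_range.mpr (by omega)) hzero, hlast] at hdiff
  exact hdiff

theorem begins_12_mu_zero (n : ℕ) (hn : 2 < n) (π : Equiv.Perm (Fin n))
    (h0 : π ⟨0, by omega⟩ = ⟨0, by omega⟩) (h1 : π ⟨1, by omega⟩ = ⟨1, by omega⟩) :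
    mu pone n π = 0 := by
  obtain ⟨m, rfl⟩ : ∃ m, n = m + 3 := ⟨n - 3, by omega⟩
  apply main_lemma m π
  · rw [show (0 : Fin (m+3)) = ⟨0, by omega⟩ from by ext; simp]
    exact h0
  · rw [show (1 : Fin (m+3)) = ⟨1, by omega⟩ from by ext; simp [Fin.val_one]]
    exact h1
end

section
/- Let π be a permutation with opposing adjacencies, written as π = γ[ℓ↦12, r↦21] (γ obtained from π by contracting a chosen up-adjacency at position ℓ and down-adjacency starting after position r to single points). Let λ = γ[ℓ↦12] and ρ = γ[r↦21]. Then every τ ∈ [1,π) that contains no up-adjacency lies in [1,ρ], and every τ ∈ [1,π) that contains no down-adjacency lies in [1,λ]; consequently every τ ∈ [1,π) ∖ ([1,λ] ∪ [1,ρ]) has opposing adjacencies. -/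
open scoped Classical

/-! ### Auxiliary definitions and lemmas -/

def SfN (L R : ℕ) (X : ℕ) : ℕ := X + (if L < X then 1 else 0) + (if R < X then 1 else 0)
def szN (L R : ℕ) (X : ℕ) : ℕ := if X = L then 2 else if X = R then 2 else 1
def clsN (R : ℕ) (X : ℕ) : ℕ := if X ≤ R then X else X - 1

lemma p12_val : ∀ j : Fin 2, (p12 j).val = j.val := by decide
lemma p21_val : ∀ j : Fin 2, (p21 j).val = 1 - j.val := by decide

lemma adj_core_up {t N : ℕ} (τ : Equiv.Perm (Fin t)) (π : Equiv.Perm (Fin N))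
    (f : Fin t ↪o Fin N) (hf : ∀ i j, τ i < τ j ↔ π (f i) < π (f j))
    (i j : Fin t) (hij : (f j).val = (f i).val + 1)
    (hv : (π (f j)).val = (π (f i)).val + 1) :
    j.val = i.val + 1 ∧ (τ j).val = (τ i).val + 1 := by
  have hij' : i < j := by rw [← f.lt_iff_lt, Fin.lt_def]; omega
  rw [Fin.lt_def] at hij'
  have h1 : j.val = i.val + 1 := by
    by_contra hne
    have hm : i.val + 1 < t := by have := j.isLt; omega
    have l2 := f.lt_iff_lt.mpr (show i < (⟨i.val+1, hm⟩ : Fin t) by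
      rw [Fin.lt_def]; exact Nat.lt_succ_self _)
    have l3 := f.lt_iff_lt.mpr (show (⟨i.val+1, hm⟩ : Fin t) < j by rw [Fin.lt_def]; dsimp; omega)
    rw [Fin.lt_def] at l2 l3
    omega
  refine ⟨h1, ?_⟩
  have hτij : τ i < τ j := (hf i j).mpr (by rw [Fin.lt_def]; omega)
  rw [Fin.lt_def] at hτij
  by_contra hne
  have hm : (τ i).val + 1 < t := by have := (τ j).isLt; omega
  have hτk : τ (τ.symm ⟨(τ i).val + 1, hm⟩) = ⟨(τ i).val + 1, hm⟩ := τ.apply_symm_apply _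
  have l2 := (hf i (τ.symm ⟨(τ i).val + 1, hm⟩)).mp (by rw [hτk, Fin.lt_def]; dsimp; omega)
  have l3 := (hf (τ.symm ⟨(τ i).val + 1, hm⟩) j).mp (by rw [hτk, Fin.lt_def]; dsimp; omega)
  rw [Fin.lt_def] at l2 l3
  omega

lemma adj_core_down {t N : ℕ} (τ : Equiv.Perm (Fin t)) (π : Equiv.Perm (Fin N))
    (f : Fin t ↪o Fin N) (hf : ∀ i j, τ i < τ j ↔ π (f i) < π (f j))
    (i j : Fin t) (hij : (f j).val = (f i).val + 1)
    (hv : (π (f i)).val = (π (f j)).val + 1) :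
    j.val = i.val + 1 ∧ (τ i).val = (τ j).val + 1 := by
  have hij' : i < j := by rw [← f.lt_iff_lt, Fin.lt_def]; omega
  rw [Fin.lt_def] at hij'
  have h1 : j.val = i.val + 1 := by
    by_contra hne
    have hm : i.val + 1 < t := by have := j.isLt; omega
    have l2 := f.lt_iff_lt.mpr (show i < (⟨i.val+1, hm⟩ : Fin t) by
      rw [Fin.lt_def]; exact Nat.lt_succ_self _)
    have l3 := f.lt_iff_lt.mpr (show (⟨i.val+1, hm⟩ : Fin t) < j by rw [Fin.lt_def]; dsimp; omega)
    rw [Fin.lt_def] at l2 l3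
    omega
  refine ⟨h1, ?_⟩
  have hτij : τ j < τ i := (hf j i).mpr (by rw [Fin.lt_def]; omega)
  rw [Fin.lt_def] at hτij
  by_contra hne
  have hm : (τ j).val + 1 < t := by have := (τ i).isLt; omega
  have hτk : τ (τ.symm ⟨(τ j).val + 1, hm⟩) = ⟨(τ j).val + 1, hm⟩ := τ.apply_symm_apply _
  have l2 := (hf j (τ.symm ⟨(τ j).val + 1, hm⟩)).mp (by rw [hτk, Fin.lt_def]; dsimp; omega)
  have l3 := (hf (τ.symm ⟨(τ j).val + 1, hm⟩) i).mp (by rw [hτk, Fin.lt_def]; dsimp; omega)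
  rw [Fin.lt_def] at l2 l3
  omega

lemma up_of_pair {t N : ℕ} (τ : Equiv.Perm (Fin t)) (π : Equiv.Perm (Fin N))
    (f : Fin t ↪o Fin N) (hf : ∀ i j, τ i < τ j ↔ π (f i) < π (f j))
    (i j : Fin t) (hij : (f j).val = (f i).val + 1)
    (hv : (π (f j)).val = (π (f i)).val + 1) : HasUpAdjacency τ := by
  obtain ⟨h1, h2⟩ := adj_core_up τ π f hf i j hij hv
  refine ⟨i.val, (τ i).val, by have := j.isLt; omega, ?_⟩
  intro jj hj
  rw [p12_val]
  rcases jj with ⟨jv, hjv⟩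
  dsimp only at hj ⊢
  interval_cases jv
  · rw [show (⟨i.val + 0, hj⟩ : Fin t) = i from Fin.ext (show i.val + 0 = i.val by omega)]; omega
  · rw [show (⟨i.val + 1, hj⟩ : Fin t) = j from Fin.ext (show i.val + 1 = j.val by omega)]; omega

lemma down_of_pair {t N : ℕ} (τ : Equiv.Perm (Fin t)) (π : Equiv.Perm (Fin N))
    (f : Fin t ↪o Fin N) (hf : ∀ i j, τ i < τ j ↔ π (f i) < π (f j))
    (i j : Fin t) (hij : (f j).val = (f i).val + 1)
    (hv : (π (f i)).val = (π (f j)).val + 1) : HasDownAdjacency τ := by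
  obtain ⟨h1, h2⟩ := adj_core_down τ π f hf i j hij hv
  refine ⟨i.val, (τ j).val, by have := j.isLt; omega, ?_⟩
  intro jj hj
  rw [p21_val]
  rcases jj with ⟨jv, hjv⟩
  dsimp only at hj ⊢
  interval_cases jv
  · rw [show (⟨i.val + 0, hj⟩ : Fin t) = i from Fin.ext (show i.val + 0 = i.val by omega)]; omega
  · rw [show (⟨i.val + 1, hj⟩ : Fin t) = j from Fin.ext (show i.val + 1 = j.val by omega)]; omega

lemma contains_of_miss {t N M : ℕ} (τ : Equiv.Perm (Fin t)) (π : Equiv.Perm (Fin N))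
    (ρ : Equiv.Perm (Fin M)) (f : Fin t ↪o Fin N)
    (hf : ∀ i j, τ i < τ j ↔ π (f i) < π (f j))
    (Q : ℕ) (hmiss : ∀ i, (f i).val ≠ Q)
    (e : Fin M → Fin N) (he : StrictMono e)
    (hcov : ∀ y : Fin N, y.val ≠ Q → ∃ x, e x = y)
    (hord : ∀ x y, ρ x < ρ y ↔ π (e x) < π (e y)) : Contains τ ρ := by
  choose h hh using fun i => hcov (f i) (hmiss i)
  have hmono : StrictMono h := fun i j hij => he.lt_iff_lt.mp (by
    rw [hh i, hh j]; exact f.strictMono hij)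
  refine ⟨OrderEmbedding.ofStrictMono h hmono, fun i j => (hf i j).trans ?_⟩
  rw [show f i = e (h i) from (hh i).symm, show f j = e (h j) from (hh j).symm]
  exact (hord (h i) (h j)).symm

lemma sum_sizes {g : ℕ} (c1 c2 : Fin g) (hcc : c1 ≠ c2) (α1 α2 : Equiv.Perm (Fin 2))
    (s : Finset (Fin g)) :
    (∑ i' ∈ s, (if i' = c1 then (⟨2, α1⟩ : SigmaPerm) else if i' = c2 then (⟨2, α2⟩ : SigmaPerm)
        else (⟨1, pone⟩ : SigmaPerm)).1)
      = s.card + ((if c1 ∈ s then 1 else 0) + (if c2 ∈ s then 1 else 0)) := by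
  have h1 : ∀ i' : Fin g, (if i' = c1 then (⟨2, α1⟩ : SigmaPerm) else if i' = c2 then
      (⟨2, α2⟩ : SigmaPerm) else (⟨1, pone⟩ : SigmaPerm)).1
      = 1 + ((if i' = c1 then 1 else 0) + (if i' = c2 then 1 else 0)) := by
    intro i'
    by_cases h1 : i' = c1
    · subst h1; simp [hcc]
    · by_cases h2 : i' = c2 <;> simp [h1, h2, Ne.symm hcc]
  rw [Finset.sum_congr rfl (fun i' _ => h1 i'), Finset.sum_add_distrib, Finset.sum_add_distrib,
    Finset.sum_const, smul_eq_mul, mul_one, Finset.sum_ite_eq' s c1 (fun _ => 1),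
    Finset.sum_ite_eq' s c2 (fun _ => 1)]

lemma snd_val_mk {m' : ℕ} (s : SigmaPerm) (σ : Equiv.Perm (Fin m')) (h : s = ⟨m', σ⟩)
    (u : ℕ) (hu : u < s.1) (hu' : u < m') : (s.2 ⟨u, hu⟩).val = (σ ⟨u, hu'⟩).val := by
  subst h; rfl

lemma dec_arith (g L R Q w X : ℕ) (hL : L < g) (hR : R < g) (hLR : L ≠ R) (hw : w < 2)
    (hQ : Q = L + (if R < L then 1 else 0) + w) (hX : X < g + 1) :
    (if X < Q then X else X + 1) - SfN L R (clsN R X) < szN L R (clsN R X) ∧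
    clsN R X < g ∧
    ((if X < Q then X else X + 1)
      = SfN L R (clsN R X) + ((if X < Q then X else X + 1) - SfN L R (clsN R X))) ∧
    (clsN R X = R → (if X < Q then X else X + 1) - SfN L R (clsN R X) = X - R) := by
  subst hQ
  simp only [SfN, szN, clsN]
  split_ifs <;> omega
lemma key_del {g N M : ℕ} (γ : Equiv.Perm (Fin g)) (c1 c2 : Fin g) (hcc : c1 ≠ c2)
    (α1 α2 : Equiv.Perm (Fin 2)) (π : Equiv.Perm (Fin N)) (ρ : Equiv.Perm (Fin M))
    (hπ : IsInflation γ
      (fun i => if i = c1 then ⟨2, α1⟩ else if i = c2 then ⟨2, α2⟩ else ⟨1, pone⟩) π)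
    (hρ : IsInflationAt γ c2 α2 ρ) :
    ∃ P B : ℕ, P + 1 < N ∧
      (∀ h : P < N, (π ⟨P, h⟩).val = B + (α1 0).val) ∧
      (∀ h : P + 1 < N, (π ⟨P + 1, h⟩).val = B + (α1 1).val) ∧
      ∀ w : ℕ, w < 2 →
        ∃ e : Fin M → Fin N, StrictMono e ∧ (∀ y : Fin N, y.val ≠ P + w → ∃ x, e x = y) ∧
          ∀ x y : Fin M, ρ x < ρ y ↔ π (e x) < π (e y) := by
  obtain ⟨-, hNsum, b, hb, hbm⟩ := hπ
  obtain ⟨hMg, ⟨b', hb'⟩, hρmap⟩ := hρ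
  simp only [] at hNsum hb hbm
  have hLg : c1.val < g := c1.isLt
  have hRg : c2.val < g := c2.isLt
  have hLR : c1.val ≠ c2.val := fun h => hcc (Fin.ext h)
  have h01 : (0 : ℕ) < 2 := by omega
  have h11 : (1 : ℕ) < 2 := by omega
  -- total size
  have hN2 : N = g + 2 := by
    rw [hNsum, sum_sizes c1 c2 hcc α1 α2]
    simp
  have hM : M = g + 1 := by omega
  have hNM : N = M + 1 := by omega
  -- partial sums
  have Ssum : ∀ i : Fin g,
      (∑ i' ∈ Finset.univ.filter (fun i' => i' < i),
        (if i' = c1 then (⟨2, α1⟩ : SigmaPerm) else if i' = c2 then (⟨2, α2⟩ : SigmaPerm)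
          else (⟨1, pone⟩ : SigmaPerm)).1) = SfN c1.val c2.val i.val := by
    intro i
    rw [sum_sizes c1 c2 hcc α1 α2]
    have hcard : (Finset.univ.filter (fun i' => i' < i)).card = i.val := by
      have : (Finset.univ.filter (fun i' => i' < i)) = Finset.Iio i := by ext x; simp
      rw [this, Fin.card_Iio]
    have hmem : ∀ c : Fin g, (c ∈ Finset.univ.filter (fun i' => i' < i)) ↔ c.val < i.val := by
      intro c
      simp only [Finset.mem_filter, Finset.mem_univ, true_and, Fin.lt_def]
    simp only [SfN, hcard, hmem]
    omega
  -- block values in π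
  have hblk : ∀ (i : Fin g) (m' : ℕ) (σ : Equiv.Perm (Fin m'))
      (hα : (if i = c1 then (⟨2, α1⟩ : SigmaPerm) else if i = c2 then (⟨2, α2⟩ : SigmaPerm)
        else (⟨1, pone⟩ : SigmaPerm)) = ⟨m', σ⟩)
      (u : ℕ) (hu' : u < m') (h : SfN c1.val c2.val i.val + u < N),
      (π ⟨SfN c1.val c2.val i.val + u, h⟩).val = b i + (σ ⟨u, hu'⟩).val := by
    intro i m' σ hα u hu' h
    have hu : u < (if i = c1 then (⟨2, α1⟩ : SigmaPerm) else if i = c2 then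
        (⟨2, α2⟩ : SigmaPerm) else (⟨1, pone⟩ : SigmaPerm)).1 := by rw [hα]; exact hu'
    have h2 : (∑ i' ∈ Finset.univ.filter (fun i' => i' < i),
        (if i' = c1 then (⟨2, α1⟩ : SigmaPerm) else if i' = c2 then (⟨2, α2⟩ : SigmaPerm)
          else (⟨1, pone⟩ : SigmaPerm)).1) + (⟨u, hu⟩ : Fin _).val < N := by
      rw [Ssum]; exact h
    have h0 := hb i ⟨u, hu⟩ h2
    rw [show (⟨SfN c1.val c2.val i.val + u, h⟩ : Fin N) = ⟨_ + (⟨u, hu⟩ : Fin _).val, h2⟩ from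
      Fin.ext (show SfN c1.val c2.val i.val + u
        = (∑ i' ∈ Finset.univ.filter (fun i' => i' < i),
            (if i' = c1 then (⟨2, α1⟩ : SigmaPerm) else if i' = c2 then (⟨2, α2⟩ : SigmaPerm)
              else (⟨1, pone⟩ : SigmaPerm)).1) + u from by rw [Ssum])]
    rw [h0, snd_val_mk _ σ hα u hu hu']
  have hbl1 : ∀ (u : ℕ) (hu : u < 2) (h : SfN c1.val c2.val c1.val + u < N),
      (π ⟨SfN c1.val c2.val c1.val + u, h⟩).val = b c1 + (α1 ⟨u, hu⟩).val :=
    fun u hu h => hblk c1 2 α1 (by simp) u hu h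
  have hbl2 : ∀ (u : ℕ) (hu : u < 2) (h : SfN c1.val c2.val c2.val + u < N),
      (π ⟨SfN c1.val c2.val c2.val + u, h⟩).val = b c2 + (α2 ⟨u, hu⟩).val :=
    fun u hu h => hblk c2 2 α2 (by simp [Ne.symm hcc]) u hu h
  have hblo : ∀ (i : Fin g), i ≠ c1 → i ≠ c2 →
      ∀ (u : ℕ) (hu : u < 1) (h : SfN c1.val c2.val i.val + u < N),
      (π ⟨SfN c1.val c2.val i.val + u, h⟩).val = b i + (pone ⟨u, hu⟩).val :=
    fun i h1 h2 u hu h => hblk i 1 pone (by simp [h1, h2]) u hu h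
  have hszc1 : szN c1.val c2.val c1.val = 2 := by simp [szN]
  have hszc2 : szN c1.val c2.val c2.val = 2 := by simp [szN, Ne.symm hLR]
  have hposlt : ∀ X u : ℕ, X < g → u < szN c1.val c2.val X → SfN c1.val c2.val X + u < N := by
    intro X u hX hu
    rw [hN2]
    simp only [SfN, szN] at hu ⊢
    split_ifs at hu ⊢ <;> omega
  -- existence of some value at each block position
  have hvals : ∀ (i : Fin g) (u : ℕ), u < szN c1.val c2.val i.val →
      ∀ h : SfN c1.val c2.val i.val + u < N,
      ∃ v, v < szN c1.val c2.val i.val ∧ (π ⟨SfN c1.val c2.val i.val + u, h⟩).val = b i + v := by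
    intro i u hu h
    by_cases h1 : i = c1
    · subst h1
      have hu2 : u < 2 := by omega
      exact ⟨(α1 ⟨u, hu2⟩).val, by rw [hszc1]; exact (α1 _).isLt, hbl1 u hu2 h⟩
    · by_cases h2 : i = c2
      · subst h2
        have hu2 : u < 2 := by omega
        exact ⟨(α2 ⟨u, hu2⟩).val, by rw [hszc2]; exact (α2 _).isLt, hbl2 u hu2 h⟩
      · have hval1 : i.val ≠ c1.val := fun hh => h1 (Fin.ext hh)
        have hval2 : i.val ≠ c2.val := fun hh => h2 (Fin.ext hh)
        have hsz1 : szN c1.val c2.val i.val = 1 := by simp [szN, hval1, hval2]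
        have hu1 : u < 1 := by omega
        refine ⟨0, by omega, ?_⟩
        rw [hblo i h1 h2 u hu1 h]
        have : (pone ⟨u, hu1⟩).val = 0 := by
          have := (pone ⟨u, hu1⟩).isLt; omega
        omega
  -- surjectivity of block values
  have hsurjv : ∀ (i : Fin g) (v : ℕ), v < szN c1.val c2.val i.val →
      ∃ (u : ℕ) (hu : u < szN c1.val c2.val i.val) (h : SfN c1.val c2.val i.val + u < N),
        (π ⟨SfN c1.val c2.val i.val + u, h⟩).val = b i + v := by
    intro i v hv
    by_cases h1 : i = c1
    · subst h1
      rw [hszc1] at hv ⊢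
      have hu2 := (α1.symm ⟨v, hv⟩).isLt
      refine ⟨(α1.symm ⟨v, hv⟩).val, hu2, hposlt _ _ hLg (by omega), ?_⟩
      rw [hbl1 _ hu2 _]
      congr 1
      rw [show (⟨(α1.symm ⟨v, hv⟩).val, hu2⟩ : Fin 2) = α1.symm ⟨v, hv⟩ from Fin.ext rfl,
        α1.apply_symm_apply]
    · by_cases h2 : i = c2
      · subst h2
        rw [hszc2] at hv ⊢
        have hu2 := (α2.symm ⟨v, hv⟩).isLt
        refine ⟨(α2.symm ⟨v, hv⟩).val, hu2, hposlt _ _ hRg (by omega), ?_⟩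
        rw [hbl2 _ hu2 _]
        congr 1
        rw [show (⟨(α2.symm ⟨v, hv⟩).val, hu2⟩ : Fin 2) = α2.symm ⟨v, hv⟩ from Fin.ext rfl,
          α2.apply_symm_apply]
      · have hval1 : i.val ≠ c1.val := fun hh => h1 (Fin.ext hh)
        have hval2 : i.val ≠ c2.val := fun hh => h2 (Fin.ext hh)
        have hsz1 : szN c1.val c2.val i.val = 1 := by simp [szN, hval1, hval2]
        have hv1 : v = 0 := by omega
        have h0 : (0:ℕ) < 1 := by omega
        refine ⟨0, by omega, hposlt _ _ i.isLt (by omega), ?_⟩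
        rw [hblo i h1 h2 0 h0 _]
        have hz : (pone ⟨0, h0⟩).val = 0 := by
          have := (pone ⟨0, h0⟩).isLt; omega
        omega
  -- distinctness of values across blocks
  have hinj : ∀ (i i' : Fin g), i ≠ i' → ∀ v v' : ℕ, v < szN c1.val c2.val i.val →
      v' < szN c1.val c2.val i'.val → b i + v ≠ b i' + v' := by
    intro i i' hne v v' hv hv' heq
    obtain ⟨u, hu, h, hval⟩ := hsurjv i v hv
    obtain ⟨u', hu', h', hval'⟩ := hsurjv i' v' hv'
    have hii' : i.val ≠ i'.val := fun hh => hne (Fin.ext hh)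
    have hi := i.isLt; have hi' := i'.isLt
    have hpos : SfN c1.val c2.val i.val + u ≠ SfN c1.val c2.val i'.val + u' := by
      simp only [SfN, szN] at hu hu' ⊢
      split_ifs at hu hu' ⊢ <;> omega
    apply hpos
    have hππ : (⟨SfN c1.val c2.val i.val + u, h⟩ : Fin N) = ⟨SfN c1.val c2.val i'.val + u', h'⟩ :=
      π.injective (Fin.ext (by rw [hval, hval']; omega))
    exact congrArg Fin.val hππ
  -- one-directional comparison
  have hlt : ∀ (i i' : Fin g), i ≠ i' → γ i < γ i' → ∀ v v' : ℕ, v < szN c1.val c2.val i.val →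
      v' < szN c1.val c2.val i'.val → b i + v < b i' + v' := by
    intro i i' hne hγ v v' hv hv'
    have hbb : b i < b i' := (hbm i i').mp hγ
    have hsz2 : szN c1.val c2.val i.val ≤ 2 := by simp only [szN]; split_ifs <;> omega
    have hsz0 : 0 < szN c1.val c2.val i'.val := by simp only [szN]; split_ifs <;> omega
    rcases v with _ | v
    · omega
    · rcases v with _ | v
      · have := hinj i i' hne 1 0 (by omega) (by omega); omega
      · omega
  have hcmp : ∀ (i i' : Fin g), i ≠ i' → ∀ v v' : ℕ, v < szN c1.val c2.val i.val →
      v' < szN c1.val c2.val i'.val → (b i + v < b i' + v' ↔ γ i < γ i') := by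
    intro i i' hne v v' hv hv'
    constructor
    · intro hlt'
      by_contra hγ
      have hγ' : γ i' < γ i :=
        lt_of_le_of_ne (not_lt.mp hγ) (fun h => hne (γ.injective h.symm))
      have := hlt i' i hne.symm hγ' v' v hv' hv
      omega
    · exact fun hγ => hlt i i' hne hγ v v' hv hv'
  -- ρ side facts
  have ρblock : ∀ (u : ℕ) (hu : u < 2) (h : c2.val + u < M),
      (ρ ⟨c2.val + u, h⟩).val = b' + (α2 ⟨u, hu⟩).val := fun u hu h => hb' ⟨u, hu⟩ h
  have hpmlt : ∀ i : Fin g, posMap c2.val 2 i.val < M := by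
    intro i
    have := i.isLt
    simp only [posMap]; split_ifs <;> omega
  have hα2sum : (α2 ⟨0, h01⟩).val + (α2 ⟨1, h11⟩).val = 1 := by
    have ha := (α2 ⟨0, h01⟩).isLt
    have hb2 := (α2 ⟨1, h11⟩).isLt
    have hne : (α2 ⟨0, h01⟩).val ≠ (α2 ⟨1, h11⟩).val := by
      intro h
      have h2 := congrArg Fin.val (α2.injective (Fin.ext h))
      simp at h2
    omega
  have hsep : ∀ z : Fin M, z.val ≠ c2.val → z.val ≠ c2.val + 1 →
      (ρ z).val ≠ b' ∧ (ρ z).val ≠ b' + 1 := by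
    intro z h1 h2
    have hp0 : c2.val + 0 < M := by omega
    have hp1 : c2.val + 1 < M := by omega
    have e0 := ρblock 0 h01 hp0
    have e1 := ρblock 1 h11 hp1
    have n0 : (ρ z).val ≠ (ρ ⟨c2.val + 0, hp0⟩).val := by
      intro h
      have hz2 := ρ.injective (Fin.ext h)
      have : z.val = c2.val + 0 := by rw [hz2]
      omega
    have n1 : (ρ z).val ≠ (ρ ⟨c2.val + 1, hp1⟩).val := by
      intro h
      have hz2 := ρ.injective (Fin.ext h)
      have : z.val = c2.val + 1 := by rw [hz2]
      omega
    have ha := (α2 ⟨0, h01⟩).isLt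
    have hb2 := (α2 ⟨1, h11⟩).isLt
    omega
  -- comparisons with γ on the ρ side
  have key : ∀ (z : Fin M) (k : Fin g), k.val = clsN c2.val z.val → z.val ≠ c2.val + 1 →
      z = ⟨posMap c2.val 2 k.val, hpmlt k⟩ := by
    intro z k hk hz
    apply Fin.ext
    show z.val = posMap c2.val 2 k.val
    have hzM := z.isLt
    have hkg := k.isLt
    simp only [posMap, clsN] at hk ⊢
    split_ifs at hk ⊢ <;> omega
  have hrep : ∀ (x : Fin M) (i : Fin g), i.val = clsN c2.val x.val →
      ∀ (y : Fin M) (i' : Fin g), i'.val = clsN c2.val y.val → i ≠ i' →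
      (ρ x < ρ y ↔ γ i < γ i') := by
    intro x i hix y i' hiy hne
    have hxM := x.isLt; have hyM := y.isLt
    have hig := i.isLt; have hi'g := i'.isLt
    rw [hρmap i i' (hpmlt i) (hpmlt i'), Fin.lt_def, Fin.lt_def]
    have hvne : i.val ≠ i'.val := fun h => hne (Fin.ext h)
    by_cases hx1 : x.val = c2.val + 1
    · have hicv : i.val = c2.val := by
        rw [hix]; simp only [clsN]; split_ifs <;> omega
      have hy1 : y.val ≠ c2.val + 1 := by
        intro h
        have : i'.val = c2.val := by rw [hiy, h]; simp only [clsN]; split_ifs <;> omega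
        omega
      have hy0 : y.val ≠ c2.val := by
        intro h
        have : i'.val = c2.val := by rw [hiy, h]; simp only [clsN]; split_ifs <;> omega
        omega
      rw [← key y i' hiy hy1]
      obtain ⟨hs1, hs2⟩ := hsep y hy0 hy1
      have hp1 : c2.val + 1 < M := by omega
      have vx : (ρ x).val = b' + (α2 ⟨1, h11⟩).val := by
        rw [show x = ⟨c2.val + 1, hp1⟩ from Fin.ext (show x.val = c2.val + 1 by omega)]
        exact ρblock 1 h11 hp1
      have hp0 : c2.val + 0 < M := by omega
      have v0 : (ρ (⟨posMap c2.val 2 i.val, hpmlt i⟩ : Fin M)).val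
          = b' + (α2 ⟨0, h01⟩).val := by
        rw [show (⟨posMap c2.val 2 i.val, hpmlt i⟩ : Fin M) = ⟨c2.val + 0, hp0⟩ from
          Fin.ext (show posMap c2.val 2 i.val = c2.val + 0 by
            simp only [posMap]; split_ifs <;> omega)]
        exact ρblock 0 h01 hp0
      have ha := (α2 ⟨0, h01⟩).isLt
      have hb2 := (α2 ⟨1, h11⟩).isLt
      omega
    · by_cases hy1 : y.val = c2.val + 1
      · have hicv : i'.val = c2.val := by
          rw [hiy]; simp only [clsN]; split_ifs <;> omega
        have hx0 : x.val ≠ c2.val := by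
          intro h
          have : i.val = c2.val := by rw [hix, h]; simp only [clsN]; split_ifs <;> omega
          omega
        rw [← key x i hix hx1]
        obtain ⟨hs1, hs2⟩ := hsep x hx0 hx1
        have hp1 : c2.val + 1 < M := by omega
        have vy : (ρ y).val = b' + (α2 ⟨1, h11⟩).val := by
          rw [show y = ⟨c2.val + 1, hp1⟩ from Fin.ext (show y.val = c2.val + 1 by omega)]
          exact ρblock 1 h11 hp1
        have hp0 : c2.val + 0 < M := by omega
        have v0 : (ρ (⟨posMap c2.val 2 i'.val, hpmlt i'⟩ : Fin M)).val
            = b' + (α2 ⟨0, h01⟩).val := by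
          rw [show (⟨posMap c2.val 2 i'.val, hpmlt i'⟩ : Fin M) = ⟨c2.val + 0, hp0⟩ from
            Fin.ext (show posMap c2.val 2 i'.val = c2.val + 0 by
              simp only [posMap]; split_ifs <;> omega)]
          exact ρblock 0 h01 hp0
        have ha := (α2 ⟨0, h01⟩).isLt
        have hb2 := (α2 ⟨1, h11⟩).isLt
        omega
      · rw [← key x i hix hx1, ← key y i' hiy hy1]
  -- main construction
  refine ⟨SfN c1.val c2.val c1.val, b c1, hposlt _ _ hLg (by omega), ?_, ?_, ?_⟩
  · intro h
    have hpos0 : SfN c1.val c2.val c1.val + 0 < N := hposlt _ _ hLg (by omega)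
    rw [show ((0 : Fin 2)) = (⟨0, h01⟩ : Fin 2) from Fin.ext rfl,
      show (⟨SfN c1.val c2.val c1.val, h⟩ : Fin N) = ⟨SfN c1.val c2.val c1.val + 0, hpos0⟩ from
        Fin.ext (show SfN c1.val c2.val c1.val = SfN c1.val c2.val c1.val + 0 by omega)]
    exact hbl1 0 h01 hpos0
  · intro h
    rw [show ((1 : Fin 2)) = (⟨1, h11⟩ : Fin 2) from Fin.ext rfl]
    exact hbl1 1 h11 h
  intro w hw
  set Q : ℕ := SfN c1.val c2.val c1.val + w with hQdef
  have hQform : Q = c1.val + (if c2.val < c1.val then 1 else 0) + w := by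
    rw [hQdef]; simp [SfN]
  have hQM : Q ≤ M := by rw [hQform]; split_ifs <;> omega
  have hbound : ∀ x : Fin M, (if x.val < Q then x.val else x.val + 1) < N := by
    intro x; have := x.isLt; split_ifs <;> omega
  set e : Fin M → Fin N := fun x => ⟨if x.val < Q then x.val else x.val + 1, hbound x⟩
    with he_def
  have hev : ∀ x : Fin M, (e x).val = if x.val < Q then x.val else x.val + 1 := fun x => rfl
  refine ⟨e, ?_, ?_, ?_⟩
  · intro x y hxy
    rw [Fin.lt_def] at hxy ⊢
    rw [hev, hev]
    split_ifs <;> omega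
  · intro y hy
    have hyN := y.isLt
    refine ⟨⟨if y.val < Q then y.val else y.val - 1, by split_ifs <;> omega⟩, ?_⟩
    apply Fin.ext
    rw [hev]
    show (if (if y.val < Q then y.val else y.val - 1) < Q
      then (if y.val < Q then y.val else y.val - 1)
      else (if y.val < Q then y.val else y.val - 1) + 1) = y.val
    split_ifs <;> omega
  -- the decomposition of positions
  have hdec : ∀ x : Fin M, ∃ u : ℕ, u < szN c1.val c2.val (clsN c2.val x.val) ∧
      clsN c2.val x.val < g ∧
      ((e x).val = SfN c1.val c2.val (clsN c2.val x.val) + u) ∧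
      (clsN c2.val x.val = c2.val → u = x.val - c2.val) := by
    intro x
    have hx0 := x.isLt
    have hx : x.val < g + 1 := by omega
    obtain ⟨a1, a2, a3, a4⟩ := dec_arith g c1.val c2.val Q w x.val hLg hRg hLR hw hQform hx
    exact ⟨_, a1, a2, by rw [hev x]; exact a3, a4⟩
  intro x y
  rcases eq_or_ne x y with rfl | hxy
  · simp
  have hvxy : x.val ≠ y.val := fun h => hxy (Fin.ext h)
  have hxM := x.isLt; have hyM := y.isLt
  obtain ⟨ux, hux, hxg, hex, hxr⟩ := hdec x
  obtain ⟨uy, huy, hyg, hey, hyr⟩ := hdec y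
  by_cases hcxy : clsN c2.val x.val = clsN c2.val y.val
  · -- both inside the c2 block
    have hkey : clsN c2.val x.val = c2.val ∧ (x.val = c2.val ∨ x.val = c2.val + 1) ∧
        (y.val = c2.val ∨ y.val = c2.val + 1) := by
      simp only [clsN] at hcxy ⊢
      split_ifs at hcxy ⊢ <;> omega
    have hu2x : x.val - c2.val < 2 := by omega
    have hu2y : y.val - c2.val < 2 := by omega
    have hposx : SfN c1.val c2.val c2.val + (x.val - c2.val) < N :=
      hposlt _ _ hRg (by omega)
    have hposy : SfN c1.val c2.val c2.val + (y.val - c2.val) < N :=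
      hposlt _ _ hRg (by omega)
    have epx : (π (e x)).val = b c2 + (α2 ⟨x.val - c2.val, hu2x⟩).val := by
      rw [show e x = ⟨SfN c1.val c2.val c2.val + (x.val - c2.val), hposx⟩ from
        Fin.ext (show (e x).val = SfN c1.val c2.val c2.val + (x.val - c2.val) by
          rw [hex, hkey.1, hxr hkey.1])]
      exact hbl2 _ hu2x hposx
    have epy : (π (e y)).val = b c2 + (α2 ⟨y.val - c2.val, hu2y⟩).val := by
      rw [show e y = ⟨SfN c1.val c2.val c2.val + (y.val - c2.val), hposy⟩ from
        Fin.ext (show (e y).val = SfN c1.val c2.val c2.val + (y.val - c2.val) by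
          have hkeyy : clsN c2.val y.val = c2.val := by rw [← hcxy]; exact hkey.1
          rw [hey, hkeyy, hyr hkeyy])]
      exact hbl2 _ hu2y hposy
    have hpρx : c2.val + (x.val - c2.val) < M := by omega
    have hpρy : c2.val + (y.val - c2.val) < M := by omega
    have rpx : (ρ x).val = b' + (α2 ⟨x.val - c2.val, hu2x⟩).val := by
      conv_lhs => rw [show x = ⟨c2.val + (x.val - c2.val), hpρx⟩ from
        Fin.ext (show x.val = c2.val + (x.val - c2.val) by omega)]
      exact ρblock _ hu2x hpρx
    have rpy : (ρ y).val = b' + (α2 ⟨y.val - c2.val, hu2y⟩).val := by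
      conv_lhs => rw [show y = ⟨c2.val + (y.val - c2.val), hpρy⟩ from
        Fin.ext (show y.val = c2.val + (y.val - c2.val) by omega)]
      exact ρblock _ hu2y hpρy
    rw [Fin.lt_def, Fin.lt_def, epx, epy, rpx, rpy]
    omega
  · -- different blocks
    have hinei : (⟨clsN c2.val x.val, hxg⟩ : Fin g) ≠ ⟨clsN c2.val y.val, hyg⟩ :=
      fun h => hcxy (congrArg Fin.val h)
    have hpx : SfN c1.val c2.val (clsN c2.val x.val) + ux < N := hex ▸ (e x).isLt
    have hpy : SfN c1.val c2.val (clsN c2.val y.val) + uy < N := hey ▸ (e y).isLt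
    obtain ⟨vx, hvx, hπx⟩ := hvals ⟨clsN c2.val x.val, hxg⟩ ux hux hpx
    obtain ⟨vy, hvy, hπy⟩ := hvals ⟨clsN c2.val y.val, hyg⟩ uy huy hpy
    have epx : (π (e x)).val = b ⟨clsN c2.val x.val, hxg⟩ + vx := by
      rw [show e x = ⟨SfN c1.val c2.val (clsN c2.val x.val) + ux, hpx⟩ from Fin.ext hex]
      exact hπx
    have epy : (π (e y)).val = b ⟨clsN c2.val y.val, hyg⟩ + vy := by
      rw [show e y = ⟨SfN c1.val c2.val (clsN c2.val y.val) + uy, hpy⟩ from Fin.ext hey]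
      exact hπy
    have hccmp := hcmp ⟨clsN c2.val x.val, hxg⟩ ⟨clsN c2.val y.val, hyg⟩ hinei vx vy hvx hvy
    have hπiff : (π (e x) < π (e y)) ↔
        b ⟨clsN c2.val x.val, hxg⟩ + vx < b ⟨clsN c2.val y.val, hyg⟩ + vy := by
      rw [Fin.lt_def, epx, epy]
    rw [hrep x ⟨clsN c2.val x.val, hxg⟩ rfl y ⟨clsN c2.val y.val, hyg⟩ rfl hinei, hπiff, hccmp]
theorem opposing_adjacency_structure (g N M : ℕ) (γ : Equiv.Perm (Fin g)) (l r : Fin g)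
    (hlr : l ≠ r)
    (π : Equiv.Perm (Fin N)) (lam rho : Equiv.Perm (Fin M))
    (hπ : IsInflation γ
      (fun i => if i = l then ⟨2, p12⟩ else if i = r then ⟨2, p21⟩ else ⟨1, pone⟩) π)
    (hlam : IsInflationAt γ l p12 lam) (hrho : IsInflationAt γ r p21 rho)
    (t : ℕ) (τ : Equiv.Perm (Fin t))
    (hτ1 : Contains pone τ) (hτπ : StrictContains τ π) :
    (¬ HasUpAdjacency τ → Contains τ rho) ∧
    (¬ HasDownAdjacency τ → Contains τ lam) ∧
    (¬ Contains τ lam ∧ ¬ Contains τ rho →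
      HasUpAdjacency τ ∧ HasDownAdjacency τ) := by
  obtain ⟨⟨f, hf⟩, -⟩ := hτπ
  have hπ' : IsInflation γ
      (fun i => if i = r then (⟨2, p21⟩ : SigmaPerm) else if i = l then ⟨2, p12⟩
        else ⟨1, pone⟩) π := by
    have heq : (fun i => if i = l then (⟨2, p12⟩ : SigmaPerm) else if i = r then ⟨2, p21⟩
        else ⟨1, pone⟩) = (fun i => if i = r then (⟨2, p21⟩ : SigmaPerm) else if i = l then
        ⟨2, p12⟩ else ⟨1, pone⟩) := by
      funext i
      by_cases h1 : i = l
      · subst h1; simp [hlr]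
      · by_cases h2 : i = r <;> simp [h1, h2, Ne.symm hlr]
    rw [← heq]
    exact hπ
  obtain ⟨P1, B1, hP1, hv10, hv11, hkey1⟩ := key_del γ l r hlr p12 p21 π rho hπ hrho
  obtain ⟨P2, B2, hP2, hv20, hv21, hkey2⟩ := key_del γ r l hlr.symm p21 p12 π lam hπ' hlam
  have hp120 : (p12 0).val = 0 := by decide
  have hp121 : (p12 1).val = 1 := by decide
  have hp210 : (p21 0).val = 1 := by decide
  have hp211 : (p21 1).val = 0 := by decide
  have part1 : ¬ HasUpAdjacency τ → Contains τ rho := by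
    intro hup
    have hmiss : ∃ w, w < 2 ∧ ∀ i, (f i).val ≠ P1 + w := by
      by_contra hcon
      push_neg at hcon
      obtain ⟨i0, hi0⟩ := hcon 0 (by omega)
      obtain ⟨i1, hi1⟩ := hcon 1 (by omega)
      apply hup
      apply up_of_pair τ π f hf i0 i1 (by omega)
      have e0 : (π (f i0)).val = B1 + (p12 0).val := by
        rw [show f i0 = ⟨P1, by omega⟩ from Fin.ext (show (f i0).val = P1 by omega)]
        exact hv10 (by omega)
      have e1 : (π (f i1)).val = B1 + (p12 1).val := by
        rw [show f i1 = ⟨P1 + 1, hP1⟩ from Fin.ext (show (f i1).val = P1 + 1 by omega)]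
        exact hv11 hP1
      omega
    obtain ⟨w, hw, hmiss'⟩ := hmiss
    obtain ⟨e, he1, he2, he3⟩ := hkey1 w hw
    exact contains_of_miss τ π rho f hf (P1 + w) hmiss' e he1 he2 he3
  have part2 : ¬ HasDownAdjacency τ → Contains τ lam := by
    intro hdn
    have hmiss : ∃ w, w < 2 ∧ ∀ i, (f i).val ≠ P2 + w := by
      by_contra hcon
      push_neg at hcon
      obtain ⟨i0, hi0⟩ := hcon 0 (by omega)
      obtain ⟨i1, hi1⟩ := hcon 1 (by omega)
      apply hdn
      apply down_of_pair τ π f hf i0 i1 (by omega)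
      have e0 : (π (f i0)).val = B2 + (p21 0).val := by
        rw [show f i0 = ⟨P2, by omega⟩ from Fin.ext (show (f i0).val = P2 by omega)]
        exact hv20 (by omega)
      have e1 : (π (f i1)).val = B2 + (p21 1).val := by
        rw [show f i1 = ⟨P2 + 1, hP2⟩ from Fin.ext (show (f i1).val = P2 + 1 by omega)]
        exact hv21 hP2
      omega
    obtain ⟨w, hw, hmiss'⟩ := hmiss
    obtain ⟨e, he1, he2, he3⟩ := hkey2 w hw
    exact contains_of_miss τ π lam f hf (P2 + w) hmiss' e he1 he2 he3
  refine ⟨part1, part2, fun h => ⟨?_, ?_⟩⟩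
  · by_contra hup
    exact h.2 (part1 hup)
  · by_contra hdn
    exact h.1 (part2 hdn)
end
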